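/- arXiv:2112.13838 — 6 statements merged into one kernel-verified Lean document; each statement's English description precedes it below -/
import Mathlib

section
/- Let K ≥ 1, T ≥ 1 be integers and let μ_t(a) ∈ [0,1] for t ∈ {1,…,T}, a ∈ {1,…,K} with significant shift times τ_0 = 1 < τ_1 < … < τ_{L̃} and τ_{L̃+1} := T+1 as defined in the context. For each round t in a phase [τ_i, τ_{i+1}), let G_t be the set of arms a that do not incur significant regret on any interval [s_1,s_2] ⊆ [τ_i, t] (G_t is nonempty for every t by minimality of τ_{i+1}). Then the dynamic regret of the oracle policy that at each round t plays an arm chosen uniformly at random from G_t, namely Σ_{t=1}^T (1/|G_t|) Σ_{a∈G_t} δ_t(a), is at most (1 + log K) · Σ_{i=0}^{L̃} √(K·(τ_{i+1} − τ_i)). -/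
/-- The worst gap `δ_t(a) = max_{a' ∈ [K]} μ_t(a') − μ_t(a)`. -/
noncomputable def worstGap (K : ℕ) (hK : 1 ≤ K) (μ : ℕ → ℕ → ℝ) (t a : ℕ) : ℝ :=
  (Finset.Icc 1 K).sup' (Finset.nonempty_Icc.mpr hK) (μ t) - μ t a

/-- Arm `a` incurs significant regret on `[s₁, s₂]`:
`Σ_{t=s₁}^{s₂} δ_t(a) ≥ √(K·(s₂ − s₁))`. -/
def SigRegret (K : ℕ) (δ : ℕ → ℕ → ℝ) (a s₁ s₂ : ℕ) : Prop :=
  Real.sqrt ((K * (s₂ - s₁) : ℕ)) ≤ ∑ t ∈ Finset.Icc s₁ s₂, δ t a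


lemma sum_inv_rank_le (d : ℕ → ℕ) (n : ℕ) : ∀ S : Finset ℕ, S.card = n →
    ∑ a ∈ S, (((S.filter (fun a' => d a ≤ d a')).card : ℝ))⁻¹ ≤ (harmonic n : ℝ) := by
  induction n with
  | zero => intro S hS; simp [Finset.card_eq_zero.mp hS]
  | succ n ih =>
    intro S hS
    have hne : S.Nonempty := Finset.card_pos.mp (by omega)
    obtain ⟨a₀, ha₀S, ha₀min⟩ := S.exists_min_image d hne
    have hfa₀ : S.filter (fun a' => d a₀ ≤ d a') = S :=
      Finset.filter_true_of_mem fun a ha => ha₀min a ha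
    rw [← Finset.add_sum_erase _ _ ha₀S, hfa₀, hS]
    have hkey : ∑ a ∈ S.erase a₀, (((S.filter (fun a' => d a ≤ d a')).card : ℝ))⁻¹ ≤
        ∑ a ∈ S.erase a₀, ((((S.erase a₀).filter (fun a' => d a ≤ d a')).card : ℝ))⁻¹ := by
      apply Finset.sum_le_sum
      intro a ha
      have h1 : a ∈ (S.erase a₀).filter (fun a' => d a ≤ d a') :=
        Finset.mem_filter.mpr ⟨ha, le_refl _⟩
      have hpos : 0 < (((S.erase a₀).filter (fun a' => d a ≤ d a')).card : ℝ) := by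
        have := Finset.card_pos.mpr ⟨a, h1⟩
        exact_mod_cast this
      have hsub : ((S.erase a₀).filter (fun a' => d a ≤ d a')).card ≤
          (S.filter (fun a' => d a ≤ d a')).card :=
        Finset.card_le_card (Finset.filter_subset_filter _ (Finset.erase_subset _ _))
      gcongr
    have hih := ih (S.erase a₀) (by rw [Finset.card_erase_of_mem ha₀S, hS]; rfl)
    have hsucc : (harmonic (n + 1) : ℝ) = (harmonic n : ℝ) + ((n + 1 : ℕ) : ℝ)⁻¹ := by
      rw [harmonic_succ]; push_cast; ring
    rw [hsucc]
    have := hkey.trans hih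
    linarith

lemma phase_bound (K : ℕ) (hK : 1 ≤ K) (δ : ℕ → ℕ → ℝ)
    (s e : ℕ) (hse : s < e)
    (hδ0 : ∀ t, s ≤ t → t < e → ∀ a ∈ Finset.Icc 1 K, 0 ≤ δ t a)
    (hδ1 : ∀ a ∈ Finset.Icc 1 K, δ s a ≤ 1)
    (G : ℕ → Finset ℕ)
    (hG : ∀ t, s ≤ t → t < e → ∀ a, (a ∈ G t ↔ a ∈ Finset.Icc 1 K ∧
        ∀ s₁ s₂, s ≤ s₁ → s₁ < s₂ → s₂ ≤ t → ¬ SigRegret K δ a s₁ s₂)) :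
    ∑ t ∈ Finset.Ico s e, (∑ a ∈ G t, δ t a) / ((G t).card : ℝ) ≤
      (1 + Real.log K) * Real.sqrt ((K * (e - s) : ℕ)) := by
  classical
  set Q : ℝ := Real.sqrt ((K * (e - s) : ℕ)) with hQdef
  have hQ0 : 0 ≤ Q := Real.sqrt_nonneg _
  have hQ1 : 1 ≤ Q := by
    rw [hQdef]
    have h1 : (1 : ℝ) ≤ ((K * (e - s) : ℕ) : ℝ) := by
      have : 1 ≤ K * (e - s) := Nat.one_le_iff_ne_zero.mpr (Nat.mul_ne_zero (by omega) (by omega))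
      exact_mod_cast this
    calc (1 : ℝ) = Real.sqrt 1 := Real.sqrt_one.symm
      _ ≤ _ := Real.sqrt_le_sqrt h1
  -- nestedness
  have hnest : ∀ t t', s ≤ t → t ≤ t' → t' < e → G t' ⊆ G t := by
    intro t t' ht htt' ht'e a ha
    rw [hG t' (le_trans ht htt') ht'e] at ha
    rw [hG t ht (lt_of_le_of_lt htt' ht'e)]
    exact ⟨ha.1, fun s₁ s₂ h1 h2 h3 => ha.2 s₁ s₂ h1 h2 (h3.trans htt')⟩
  have hGsub : ∀ t, s ≤ t → t < e → G t ⊆ Finset.Icc 1 K := by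
    intro t ht hte a ha
    exact ((hG t ht hte a).mp ha).1
  have hGs : ∀ a ∈ Finset.Icc 1 K, a ∈ G s := by
    intro a ha
    rw [hG s le_rfl hse]
    exact ⟨ha, fun s₁ s₂ h1 h2 h3 => absurd (lt_of_lt_of_le h2 h3) (by omega)⟩
  -- active time sets and last active times
  set A : ℕ → Finset ℕ := fun a => (Finset.Ico s e).filter (fun t => a ∈ G t) with hAdef
  have hAne : ∀ a ∈ Finset.Icc 1 K, (A a).Nonempty := by
    intro a ha
    exact ⟨s, Finset.mem_filter.mpr ⟨Finset.mem_Ico.mpr ⟨le_rfl, hse⟩, hGs a ha⟩⟩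
  set d : ℕ → ℕ := fun a => if h : (A a).Nonempty then (A a).max' h else 0 with hddef
  have hdmem : ∀ a ∈ Finset.Icc 1 K, d a ∈ A a := by
    intro a ha
    simp only [hddef, dif_pos (hAne a ha)]
    exact (A a).max'_mem _
  have hdle : ∀ a ∈ Finset.Icc 1 K, ∀ t ∈ A a, t ≤ d a := by
    intro a ha t ht
    simp only [hddef, dif_pos (hAne a ha)]
    exact (A a).le_max' t ht
  have hds : ∀ a ∈ Finset.Icc 1 K, s ≤ d a := by
    intro a ha
    exact (Finset.mem_Ico.mp (Finset.mem_filter.mp (hdmem a ha)).1).1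
  have hde : ∀ a ∈ Finset.Icc 1 K, d a < e := by
    intro a ha
    exact (Finset.mem_Ico.mp (Finset.mem_filter.mp (hdmem a ha)).1).2
  have hdG : ∀ a ∈ Finset.Icc 1 K, a ∈ G (d a) := by
    intro a ha
    exact (Finset.mem_filter.mp (hdmem a ha)).2
  have hAeq : ∀ a ∈ Finset.Icc 1 K, A a = Finset.Icc s (d a) := by
    intro a ha
    ext t
    simp only [hAdef, Finset.mem_filter, Finset.mem_Ico, Finset.mem_Icc]
    constructor
    · intro ⟨⟨h1, h2⟩, h3⟩
      exact ⟨h1, hdle a ha t (Finset.mem_filter.mpr ⟨Finset.mem_Ico.mpr ⟨h1, h2⟩, h3⟩)⟩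
    · intro ⟨h1, h2⟩
      exact ⟨⟨h1, lt_of_le_of_lt h2 (hde a ha)⟩,
        hnest t (d a) h1 h2 (hde a ha) (hdG a ha)⟩
  -- rank
  set r : ℕ → ℕ := fun a => ((Finset.Icc 1 K).filter (fun a' => d a ≤ d a')).card with hrdef
  have hrpos : ∀ a ∈ Finset.Icc 1 K, 0 < r a := by
    intro a ha
    exact Finset.card_pos.mpr ⟨a, Finset.mem_filter.mpr ⟨ha, le_rfl⟩⟩
  have hrank : ∀ a ∈ Finset.Icc 1 K, ∀ t ∈ Finset.Icc s (d a), r a ≤ (G t).card := by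
    intro a ha t ht
    obtain ⟨hts, htd⟩ := Finset.mem_Icc.mp ht
    apply Finset.card_le_card
    intro a' ha'
    obtain ⟨ha'K, hda'⟩ := Finset.mem_filter.mp ha'
    have : a' ∈ G (d a') := hdG a' ha'K
    exact hnest t (d a') hts (le_trans htd hda') (hde a' ha'K) this
  -- cumulative gap bound
  have hcum : ∀ a ∈ Finset.Icc 1 K, ∑ t ∈ Finset.Icc s (d a), δ t a ≤ Q := by
    intro a ha
    rcases eq_or_lt_of_le (hds a ha) with h | h
    · rw [← h]
      simp only [Finset.Icc_self, Finset.sum_singleton]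
      exact le_trans (hδ1 a ha) hQ1
    · have hsafe := ((hG (d a) (hds a ha) (hde a ha) a).mp (hdG a ha)).2
      have hnot := hsafe s (d a) le_rfl h le_rfl
      rw [SigRegret, not_le] at hnot
      apply le_of_lt (lt_of_lt_of_le hnot _)
      rw [hQdef]
      apply Real.sqrt_le_sqrt
      have hdae := hde a ha
      have hmul : K * (d a - s) ≤ K * (e - s) := Nat.mul_le_mul_left _ (by omega)
      exact_mod_cast hmul
  -- main computation
  have step1 : ∑ t ∈ Finset.Ico s e, (∑ a ∈ G t, δ t a) / ((G t).card : ℝ) =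
      ∑ a ∈ Finset.Icc 1 K, ∑ t ∈ Finset.Icc s (d a), δ t a / ((G t).card : ℝ) := by
    have e1 : ∑ t ∈ Finset.Ico s e, (∑ a ∈ G t, δ t a) / ((G t).card : ℝ)
        = ∑ t ∈ Finset.Ico s e, ∑ a ∈ G t, δ t a / ((G t).card : ℝ) := by
      apply Finset.sum_congr rfl; intro t _; rw [Finset.sum_div]
    rw [e1]
    apply Finset.sum_comm'
    intro t a
    constructor
    · intro ⟨htIco, haG⟩
      obtain ⟨hts, hte⟩ := Finset.mem_Ico.mp htIco
      have haK : a ∈ Finset.Icc 1 K := hGsub t hts hte haG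
      refine ⟨?_, haK⟩
      rw [← hAeq a haK]
      exact Finset.mem_filter.mpr ⟨htIco, haG⟩
    · intro ⟨htA, haK⟩
      rw [← hAeq a haK] at htA
      exact ⟨(Finset.mem_filter.mp htA).1, (Finset.mem_filter.mp htA).2⟩
  rw [step1]
  have step2 : ∀ a ∈ Finset.Icc 1 K,
      ∑ t ∈ Finset.Icc s (d a), δ t a / ((G t).card : ℝ) ≤ Q * ((r a : ℝ))⁻¹ := by
    intro a ha
    have h1 : ∑ t ∈ Finset.Icc s (d a), δ t a / ((G t).card : ℝ) ≤
        ∑ t ∈ Finset.Icc s (d a), δ t a / ((r a : ℝ)) := by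
      apply Finset.sum_le_sum
      intro t ht
      obtain ⟨hts, htd⟩ := Finset.mem_Icc.mp ht
      have hte : t < e := lt_of_le_of_lt htd (hde a ha)
      have hδnn : 0 ≤ δ t a := hδ0 t hts hte a ha
      have hrp : (0 : ℝ) < (r a : ℝ) := by exact_mod_cast hrpos a ha
      have hrg : (r a : ℝ) ≤ ((G t).card : ℝ) := by exact_mod_cast hrank a ha t ht
      exact div_le_div_of_nonneg_left hδnn hrp hrg
    have h2 : ∑ t ∈ Finset.Icc s (d a), δ t a / ((r a : ℝ)) =
        (∑ t ∈ Finset.Icc s (d a), δ t a) / ((r a : ℝ)) := (Finset.sum_div _ _ _).symm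
    have hrp : (0 : ℝ) < (r a : ℝ) := by exact_mod_cast hrpos a ha
    calc ∑ t ∈ Finset.Icc s (d a), δ t a / ((G t).card : ℝ)
        ≤ (∑ t ∈ Finset.Icc s (d a), δ t a) / ((r a : ℝ)) := by rw [← h2]; exact h1
      _ ≤ Q / ((r a : ℝ)) := by
          exact div_le_div_of_nonneg_right (hcum a ha) hrp.le
      _ = Q * ((r a : ℝ))⁻¹ := div_eq_mul_inv _ _
  calc ∑ a ∈ Finset.Icc 1 K, ∑ t ∈ Finset.Icc s (d a), δ t a / ((G t).card : ℝ)
      ≤ ∑ a ∈ Finset.Icc 1 K, Q * ((r a : ℝ))⁻¹ := Finset.sum_le_sum step2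
    _ = Q * ∑ a ∈ Finset.Icc 1 K, ((r a : ℝ))⁻¹ := by rw [Finset.mul_sum]
    _ ≤ Q * (harmonic K : ℝ) := by
        apply mul_le_mul_of_nonneg_left _ hQ0
        have := sum_inv_rank_le d K (Finset.Icc 1 K) (by simp)
        simpa [hrdef] using this
    _ ≤ Q * (1 + Real.log K) := by
        apply mul_le_mul_of_nonneg_left (harmonic_le_one_add_log K) hQ0
    _ = (1 + Real.log K) * Q := mul_comm _ _

/-- Proposition 1, sanity check: the oracle that plays uniformly at random
from the good set `G t` of safe arms has dynamic regret at most
`(1 + log K) · Σ_{i=0}^{L} √(K·(τ_{i+1} − τ_i))`. -/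
theorem oracle_regret_bound
    (K T : ℕ) (hK : 1 ≤ K) (hT : 1 ≤ T)
    (μ : ℕ → ℕ → ℝ)
    (hμ : ∀ t ∈ Finset.Icc 1 T, ∀ a ∈ Finset.Icc 1 K, μ t a ∈ Set.Icc (0 : ℝ) 1)
    (δ : ℕ → ℕ → ℝ) (hδ : ∀ t a, δ t a = worstGap K hK μ t a)
    -- significant shift times τ_0 = 1 < τ_1 < … < τ_L, with τ_{L+1} = T + 1
    (L : ℕ) (τ : ℕ → ℕ)
    (hτ0 : τ 0 = 1) (hτlast : τ (L + 1) = T + 1)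
    (hτmono : ∀ i ≤ L, τ i < τ (i + 1))
    -- each recorded shift time τ_{i+1} (i < L) is a significant shift: every arm incurs
    -- significant regret on some subinterval of [τ_i, τ_{i+1}]
    (hshift : ∀ i < L, ∀ a ∈ Finset.Icc 1 K, ∃ s₁ s₂, τ i ≤ s₁ ∧ s₁ < s₂ ∧ s₂ ≤ τ (i + 1) ∧
      SigRegret K δ a s₁ s₂)
    -- minimality: strictly before the end of a phase, some arm has no significant regret yet
    (hmin : ∀ i ≤ L, ∀ t, τ i ≤ t → t < τ (i + 1) → t ≤ T →
      ∃ a ∈ Finset.Icc 1 K, ∀ s₁ s₂, τ i ≤ s₁ → s₁ < s₂ → s₂ ≤ t → ¬ SigRegret K δ a s₁ s₂)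
    -- the good sets: for t in phase [τ_i, τ_{i+1}), G t is the set of arms with no
    -- significant regret on any subinterval of [τ_i, t]
    (G : ℕ → Finset ℕ)
    (hG : ∀ i ≤ L, ∀ t, τ i ≤ t → t < τ (i + 1) → ∀ a,
      (a ∈ G t ↔ a ∈ Finset.Icc 1 K ∧
        ∀ s₁ s₂, τ i ≤ s₁ → s₁ < s₂ → s₂ ≤ t → ¬ SigRegret K δ a s₁ s₂))
    (hGne : ∀ t ∈ Finset.Icc 1 T, (G t).Nonempty) :
    ∑ t ∈ Finset.Icc 1 T, (∑ a ∈ G t, δ t a) / ((G t).card : ℝ) ≤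
      (1 + Real.log K) *
        ∑ i ∈ Finset.range (L + 1), Real.sqrt ((K * (τ (i + 1) - τ i) : ℕ)) := by
  classical
  have hδmem : ∀ t ∈ Finset.Icc 1 T, ∀ a ∈ Finset.Icc 1 K, 0 ≤ δ t a ∧ δ t a ≤ 1 := by
    intro t ht a ha
    rw [hδ]
    unfold worstGap
    have hsup_le : (Finset.Icc 1 K).sup' (Finset.nonempty_Icc.mpr hK) (μ t) ≤ 1 :=
      Finset.sup'_le _ _ fun b hb => (hμ t ht b hb).2
    have hle_sup : μ t a ≤ (Finset.Icc 1 K).sup' (Finset.nonempty_Icc.mpr hK) (μ t) :=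
      Finset.le_sup' (μ t) ha
    have h0 : 0 ≤ μ t a := (hμ t ht a ha).1
    constructor <;> linarith
  have hτmono' : ∀ j, j ≤ L + 1 → ∀ i, i ≤ j → τ i ≤ τ j := by
    intro j
    induction j with
    | zero => intro _ i hi; have : i = 0 := Nat.le_zero.mp hi; rw [this]
    | succ j ih =>
      intro hj i hi
      by_cases h : i = j + 1
      · rw [h]
      · have hij : i ≤ j := by omega
        exact (ih (by omega) i hij).trans (hτmono j (by omega)).le
  have hτ1 : ∀ i, i ≤ L + 1 → 1 ≤ τ i := by
    intro i hi
    have := hτmono' i hi 0 (Nat.zero_le _)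
    omega
  have hτT : ∀ i, i ≤ L + 1 → τ i ≤ T + 1 := by
    intro i hi
    have := hτmono' (L + 1) le_rfl i hi
    omega
  set f : ℕ → ℝ := fun t => (∑ a ∈ G t, δ t a) / ((G t).card : ℝ) with hfdef
  have hpart : ∀ j, j ≤ L + 1 →
      ∑ t ∈ Finset.Ico (τ 0) (τ j), f t =
        ∑ i ∈ Finset.range j, ∑ t ∈ Finset.Ico (τ i) (τ (i + 1)), f t := by
    intro j
    induction j with
    | zero => simp
    | succ j ih =>
      intro hj
      rw [Finset.sum_range_succ, ← ih (by omega),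
        Finset.sum_Ico_consecutive f (hτmono' j (by omega) 0 (Nat.zero_le _))
          (hτmono j (by omega)).le]
  have hIcc : Finset.Icc 1 T = Finset.Ico (τ 0) (τ (L + 1)) := by
    rw [hτ0, hτlast, Finset.Ico_add_one_right_eq_Icc]
  calc ∑ t ∈ Finset.Icc 1 T, (∑ a ∈ G t, δ t a) / ((G t).card : ℝ)
      = ∑ i ∈ Finset.range (L + 1), ∑ t ∈ Finset.Ico (τ i) (τ (i + 1)), f t := by
        rw [hIcc]; exact hpart (L + 1) le_rfl
    _ ≤ ∑ i ∈ Finset.range (L + 1),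
        (1 + Real.log K) * Real.sqrt ((K * (τ (i + 1) - τ i) : ℕ)) := by
        apply Finset.sum_le_sum
        intro i hi
        have hiL : i ≤ L := by
          have := Finset.mem_range.mp hi; omega
        have hmemT : ∀ t, τ i ≤ t → t < τ (i + 1) → t ∈ Finset.Icc 1 T := by
          intro t h1 h2
          have ha := hτ1 i (by omega)
          have hb := hτT (i + 1) (by omega)
          exact Finset.mem_Icc.mpr ⟨by omega, by omega⟩
        apply phase_bound K hK δ (τ i) (τ (i + 1)) (hτmono i hiL)
        · intro t h1 h2 a ha
          exact (hδmem t (hmemT t h1 h2) a ha).1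
        · intro a ha
          exact (hδmem (τ i) (hmemT (τ i) le_rfl (hτmono i hiL)) a ha).2
        · intro t h1 h2 a
          exact hG i hiL t h1 h2 a
    _ = (1 + Real.log K) *
        ∑ i ∈ Finset.range (L + 1), Real.sqrt ((K * (τ (i + 1) - τ i) : ℕ)) := by
        rw [Finset.mul_sum]
end

section
/- Let K ≥ 1, T ≥ 1 be integers and let μ_t(a) ∈ [0,1] with significant shift times τ_0 = 1 < τ_1 < … < τ_{L̃}, τ_{L̃+1} := T+1, and good sets G_t as defined in the context. Let {S_t}_{t=1}^T be a sequence of nonempty arm sets such that S_t ⊆ G_t for every t, and such that within any fixed phase [τ_i, τ_{i+1}) the sets are nested: S_t ⊇ S_{t+1} for all t with t, t+1 ∈ [τ_i, τ_{i+1}). Then Σ_{t=1}^T (1/|S_t|) Σ_{a∈S_t} δ_t(a) ≤ (1 + log K) · Σ_{i=0}^{L̃} √(K·(τ_{i+1} − τ_i)). -/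
lemma sum_inv_rank_le_s1 : ∀ (n : ℕ) (A : Finset ℕ) (g : ℕ → ℕ), A.card = n →
    ∑ a ∈ A, (1 : ℝ) / ((A.filter fun b => g a ≤ g b).card) ≤
      ∑ j ∈ Finset.range n, (1 : ℝ) / (j + 1) := by
  intro n
  induction n with
  | zero => intro A g hA; rw [Finset.card_eq_zero.mp hA]; simp
  | succ n ih =>
    intro A g hA
    have hAne : A.Nonempty := Finset.card_pos.mp (by omega)
    obtain ⟨a0, ha0, hmin⟩ := A.exists_min_image g hAne
    have hA' : (A.erase a0).card = n := by rw [Finset.card_erase_of_mem ha0, hA]; rfl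
    rw [← Finset.sum_erase_add A _ ha0, Finset.sum_range_succ]
    have h1 : (1 : ℝ) / ((A.filter fun b => g a0 ≤ g b).card) = 1 / (n + 1) := by
      rw [Finset.filter_true_of_mem (fun b hb => hmin b hb), hA]
      push_cast; ring_nf
    rw [h1]
    refine add_le_add ?_ le_rfl
    refine le_trans ?_ (ih (A.erase a0) g hA')
    refine Finset.sum_le_sum fun a ha => ?_
    have hsub : ((A.erase a0).filter fun b => g a ≤ g b) ⊆
        (A.filter fun b => g a ≤ g b) :=
      Finset.filter_subset_filter _ (Finset.erase_subset _ _)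
    have hposs : a ∈ (A.erase a0).filter fun b => g a ≤ g b :=
      Finset.mem_filter.mpr ⟨ha, le_rfl⟩
    have hpos : (0 : ℝ) < ((A.erase a0).filter fun b => g a ≤ g b).card := by
      exact_mod_cast Finset.card_pos.mpr ⟨a, hposs⟩
    apply one_div_le_one_div_of_le hpos
    exact_mod_cast Finset.card_le_card hsub

lemma harmonic_sum_le (K m : ℕ) (hK : 1 ≤ K) (hm : m ≤ K) :
    ∑ j ∈ Finset.range m, (1 : ℝ) / (j + 1) ≤ 1 + Real.log K := by
  have h1 : ∑ j ∈ Finset.range m, (1 : ℝ) / (j + 1) = (harmonic m : ℝ) := by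
    rw [harmonic]; push_cast; simp [one_div]
  rw [h1]
  refine (harmonic_le_one_add_log m).trans (add_le_add le_rfl ?_)
  rcases Nat.eq_zero_or_pos m with hm0 | hm0
  · simp [hm0]; exact Real.log_nonneg (by exact_mod_cast hK)
  · exact Real.log_le_log (by exact_mod_cast hm0) (by exact_mod_cast hm)

lemma phase_bound_s1 (δ : ℕ → ℕ → ℝ) (S : ℕ → Finset ℕ) (s e K : ℕ) (hK : 1 ≤ K) (hse : s ≤ e)
    (B : ℝ) (hB : 0 ≤ B)
    (hne : ∀ t, s ≤ t → t ≤ e → (S t).Nonempty)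
    (hnest : ∀ t, s ≤ t → t + 1 ≤ e → S (t + 1) ⊆ S t)
    (hpos : ∀ t, s ≤ t → t ≤ e → ∀ a ∈ S t, 0 ≤ δ t a)
    (hsum : ∀ t, s ≤ t → t ≤ e → ∀ a ∈ S t, ∑ u ∈ Finset.Icc s t, δ u a ≤ B)
    (hcard : (S s).card ≤ K)
    (hharm : ∀ m : ℕ, m ≤ K → ∑ j ∈ Finset.range m, (1 : ℝ) / (j + 1) ≤ 1 + Real.log K)
    (hrank : ∀ (A : Finset ℕ) (g : ℕ → ℕ),
      ∑ a ∈ A, (1 : ℝ) / ((A.filter fun b => g a ≤ g b).card) ≤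
        ∑ j ∈ Finset.range A.card, (1 : ℝ) / (j + 1)) :
    ∑ t ∈ Finset.Icc s e, (∑ a ∈ S t, δ t a) / ((S t).card : ℝ) ≤ (1 + Real.log K) * B := by
  classical
  -- monotonicity within phase
  have hmono : ∀ t₁ t₂, s ≤ t₁ → t₁ ≤ t₂ → t₂ ≤ e → S t₂ ⊆ S t₁ := by
    intro t₁ t₂ h1 h12 h2e
    induction t₂, h12 using Nat.le_induction with
    | base => exact subset_rfl
    | succ n hn ih =>
      exact (hnest n (h1.trans hn) h2e).trans (ih (Nat.le_of_succ_le h2e))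
  set F : ℕ → Finset ℕ := fun a => (Finset.Icc s e).filter (fun t => a ∈ S t) with hF
  have hFne : ∀ a ∈ S s, (F a).Nonempty := fun a ha =>
    ⟨s, Finset.mem_filter.mpr ⟨Finset.mem_Icc.mpr ⟨le_rfl, hse⟩, ha⟩⟩
  set lastT : ℕ → ℕ := fun a => if h : (F a).Nonempty then (F a).max' h else s with hlastT
  have hlmem : ∀ a ∈ S s, lastT a ∈ F a := by
    intro a ha
    simp only [hlastT, dif_pos (hFne a ha)]
    exact (F a).max'_mem _
  have hls : ∀ a ∈ S s, s ≤ lastT a ∧ lastT a ≤ e ∧ a ∈ S (lastT a) := by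
    intro a ha
    have := hlmem a ha
    rw [hF, Finset.mem_filter, Finset.mem_Icc] at this
    exact ⟨this.1.1, this.1.2, this.2⟩
  have hchar : ∀ a ∈ S s, ∀ t, s ≤ t → t ≤ lastT a → a ∈ S t := by
    intro a ha t hst htl
    obtain ⟨_, hle, hmem⟩ := hls a ha
    exact hmono t (lastT a) hst htl hle hmem
  have hFeq : ∀ a ∈ S s, F a = Finset.Icc s (lastT a) := by
    intro a ha
    ext t
    rw [hF, Finset.mem_filter, Finset.mem_Icc, Finset.mem_Icc]
    constructor
    · rintro ⟨⟨h1, h2⟩, h3⟩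
      refine ⟨h1, ?_⟩
      have : t ∈ F a := by rw [hF]; exact Finset.mem_filter.mpr ⟨Finset.mem_Icc.mpr ⟨h1, h2⟩, h3⟩
      simp only [hlastT, dif_pos (hFne a ha)]
      exact (F a).le_max' t this
    · rintro ⟨h1, h2⟩
      exact ⟨⟨h1, h2.trans (hls a ha).2.1⟩, hchar a ha t h1 h2⟩
  set r : ℕ → ℕ := fun a => ((S s).filter fun b => lastT a ≤ lastT b).card with hr
  have hrpos : ∀ a ∈ S s, 0 < r a := by
    intro a ha
    exact Finset.card_pos.mpr ⟨a, Finset.mem_filter.mpr ⟨ha, le_rfl⟩⟩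
  have hrle : ∀ a ∈ S s, ∀ t, s ≤ t → t ≤ lastT a → r a ≤ (S t).card := by
    intro a ha t hst htl
    refine Finset.card_le_card ?_
    intro b hb
    rw [Finset.mem_filter] at hb
    exact hchar b hb.1 t hst (htl.trans hb.2)
  calc ∑ t ∈ Finset.Icc s e, (∑ a ∈ S t, δ t a) / ((S t).card : ℝ)
      = ∑ t ∈ Finset.Icc s e, ∑ a ∈ S t, δ t a / ((S t).card : ℝ) := by
        simp_rw [Finset.sum_div]
    _ = ∑ t ∈ Finset.Icc s e, ∑ a ∈ S s,
          if a ∈ S t then δ t a / ((S t).card : ℝ) else 0 := by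
        refine Finset.sum_congr rfl fun t ht => ?_
        rw [Finset.mem_Icc] at ht
        rw [← Finset.sum_filter, Finset.filter_mem_eq_inter,
          Finset.inter_eq_right.mpr (hmono s t le_rfl ht.1 ht.2)]
    _ = ∑ a ∈ S s, ∑ t ∈ Finset.Icc s e,
          if a ∈ S t then δ t a / ((S t).card : ℝ) else 0 := Finset.sum_comm
    _ = ∑ a ∈ S s, ∑ t ∈ Finset.Icc s (lastT a), δ t a / ((S t).card : ℝ) := by
        refine Finset.sum_congr rfl fun a ha => ?_
        rw [← Finset.sum_filter,
          show Finset.filter (fun t => a ∈ S t) (Finset.Icc s e) = Finset.Icc s (lastT a) from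
            hFeq a ha]
    _ ≤ ∑ a ∈ S s, ∑ t ∈ Finset.Icc s (lastT a), δ t a / (r a : ℝ) := by
        refine Finset.sum_le_sum fun a ha => Finset.sum_le_sum fun t ht => ?_
        rw [Finset.mem_Icc] at ht
        have hte : t ≤ e := ht.2.trans (hls a ha).2.1
        have hmem : a ∈ S t := hchar a ha t ht.1 ht.2
        have hd : 0 ≤ δ t a := hpos t ht.1 hte a hmem
        have h1 : (0 : ℝ) < r a := by exact_mod_cast hrpos a ha
        have h2 : (r a : ℝ) ≤ (S t).card := by exact_mod_cast hrle a ha t ht.1 ht.2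
        exact div_le_div_of_nonneg_left hd h1 h2
    _ = ∑ a ∈ S s, (∑ t ∈ Finset.Icc s (lastT a), δ t a) / (r a : ℝ) := by
        simp_rw [Finset.sum_div]
    _ ≤ ∑ a ∈ S s, B / (r a : ℝ) := by
        refine Finset.sum_le_sum fun a ha => ?_
        have h1 : (0 : ℝ) < r a := by exact_mod_cast hrpos a ha
        obtain ⟨h2, h3, h4⟩ := hls a ha
        exact (div_le_div_iff_of_pos_right h1).mpr (hsum (lastT a) h2 h3 a h4)
    _ = B * ∑ a ∈ S s, 1 / (r a : ℝ) := by
        rw [Finset.mul_sum]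
        exact Finset.sum_congr rfl fun a _ => by rw [div_eq_mul_one_div]
    _ ≤ B * (1 + Real.log K) := by
        refine mul_le_mul_of_nonneg_left ?_ hB
        refine le_trans (hrank (S s) lastT) (hharm _ hcard)
    _ = (1 + Real.log K) * B := mul_comm _ _

/-- Lemma 4: any procedure playing uniformly at random from nonempty sets
`S t ⊆ G t` that are nested within each phase has dynamic regret at most
`(1 + log K) · Σ_{i=0}^{L} √(K·(τ_{i+1} − τ_i))`. -/
theorem nested_subset_oracle_regret_bound
    (K T : ℕ) (hK : 1 ≤ K) (hT : 1 ≤ T)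
    (μ : ℕ → ℕ → ℝ)
    (hμ : ∀ t ∈ Finset.Icc 1 T, ∀ a ∈ Finset.Icc 1 K, μ t a ∈ Set.Icc (0 : ℝ) 1)
    (δ : ℕ → ℕ → ℝ) (hδ : ∀ t a, δ t a = worstGap K hK μ t a)
    -- significant shift times τ_0 = 1 < τ_1 < … < τ_L, with τ_{L+1} = T + 1
    (L : ℕ) (τ : ℕ → ℕ)
    (hτ0 : τ 0 = 1) (hτlast : τ (L + 1) = T + 1)
    (hτmono : ∀ i ≤ L, τ i < τ (i + 1))
    -- each recorded shift time τ_{i+1} (i < L) is a significant shift: every arm incurs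
    -- significant regret on some subinterval of [τ_i, τ_{i+1}]
    (hshift : ∀ i < L, ∀ a ∈ Finset.Icc 1 K, ∃ s₁ s₂, τ i ≤ s₁ ∧ s₁ < s₂ ∧ s₂ ≤ τ (i + 1) ∧
      SigRegret K δ a s₁ s₂)
    -- minimality: strictly before the end of a phase, some arm has no significant regret yet
    (hmin : ∀ i ≤ L, ∀ t, τ i ≤ t → t < τ (i + 1) → t ≤ T →
      ∃ a ∈ Finset.Icc 1 K, ∀ s₁ s₂, τ i ≤ s₁ → s₁ < s₂ → s₂ ≤ t → ¬ SigRegret K δ a s₁ s₂)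
    -- the good sets: for t in phase [τ_i, τ_{i+1}), G t is the set of arms with no
    -- significant regret on any subinterval of [τ_i, t]
    (G : ℕ → Finset ℕ)
    (hG : ∀ i ≤ L, ∀ t, τ i ≤ t → t < τ (i + 1) → ∀ a,
      (a ∈ G t ↔ a ∈ Finset.Icc 1 K ∧
        ∀ s₁ s₂, τ i ≤ s₁ → s₁ < s₂ → s₂ ≤ t → ¬ SigRegret K δ a s₁ s₂))
    -- the played sets: nonempty subsets of the good sets, nested within each phase
    (S : ℕ → Finset ℕ)
    (hSne : ∀ t ∈ Finset.Icc 1 T, (S t).Nonempty)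
    (hSsub : ∀ t ∈ Finset.Icc 1 T, S t ⊆ G t)
    (hSnested : ∀ i ≤ L, ∀ t, τ i ≤ t → t + 1 < τ (i + 1) → S (t + 1) ⊆ S t) :
    ∑ t ∈ Finset.Icc 1 T, (∑ a ∈ S t, δ t a) / ((S t).card : ℝ) ≤
      (1 + Real.log K) *
        ∑ i ∈ Finset.range (L + 1), Real.sqrt ((K * (τ (i + 1) - τ i) : ℕ)) := by

  classical
  -- monotonicity of τ
  have hτm : ∀ i j, i ≤ j → j ≤ L + 1 → τ i ≤ τ j := by
    intro i j hij hjL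
    induction j, hij using Nat.le_induction with
    | base => exact le_rfl
    | succ n hn ih =>
      exact (ih (by omega)).trans (hτmono n (by omega)).le
  set f : ℕ → ℝ := fun t => (∑ a ∈ S t, δ t a) / ((S t).card : ℝ) with hf
  -- decomposition into phases
  have hdec : ∀ n, n ≤ L + 1 → ∑ t ∈ Finset.Ico (τ 0) (τ n), f t =
      ∑ i ∈ Finset.range n, ∑ t ∈ Finset.Ico (τ i) (τ (i + 1)), f t := by
    intro n
    induction n with
    | zero => simp
    | succ n ih =>
      intro hn
      rw [Finset.sum_range_succ, ← ih (by omega),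
        Finset.sum_Ico_consecutive _ (hτm 0 n (by omega) (by omega))
          ((hτmono n (by omega)).le)]
  have hIcc : Finset.Icc 1 T = Finset.Ico (τ 0) (τ (L + 1)) := by
    rw [hτ0, hτlast, Finset.Ico_add_one_right_eq_Icc]
  calc ∑ t ∈ Finset.Icc 1 T, f t
      = ∑ i ∈ Finset.range (L + 1), ∑ t ∈ Finset.Ico (τ i) (τ (i + 1)), f t := by
        rw [hIcc, hdec (L + 1) le_rfl]
    _ ≤ ∑ i ∈ Finset.range (L + 1),
          (1 + Real.log K) * Real.sqrt ((K * (τ (i + 1) - τ i) : ℕ)) := by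
        refine Finset.sum_le_sum fun i hiR => ?_
        have hi : i ≤ L := by simpa [Nat.lt_succ_iff] using hiR
        have hlt : τ i < τ (i + 1) := hτmono i hi
        have hs1 : 1 ≤ τ i := hτ0 ▸ hτm 0 i (by omega) (by omega)
        have heT : τ (i + 1) ≤ T + 1 := hτlast ▸ hτm (i + 1) (L + 1) (by omega) le_rfl
        have hIco : Finset.Ico (τ i) (τ (i + 1)) = Finset.Icc (τ i) (τ (i + 1) - 1) := by
          rw [← Finset.Ico_add_one_right_eq_Icc]
          congr 1
          omega
        have hmemT : ∀ t, τ i ≤ t → t ≤ τ (i + 1) - 1 → t ∈ Finset.Icc 1 T :=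
          fun t h1 h2 => Finset.mem_Icc.mpr ⟨by omega, by omega⟩
        have hGt : ∀ t, τ i ≤ t → t ≤ τ (i + 1) - 1 → ∀ a ∈ S t,
            a ∈ Finset.Icc 1 K ∧
              ∀ s₁ s₂, τ i ≤ s₁ → s₁ < s₂ → s₂ ≤ t → ¬ SigRegret K δ a s₁ s₂ := by
          intro t h1 h2 a haS
          exact (hG i hi t h1 (by omega) a).mp (hSsub t (hmemT t h1 h2) haS)
        have hKΔ : 1 ≤ K * (τ (i + 1) - τ i) :=
          Nat.one_le_iff_ne_zero.mpr (Nat.mul_ne_zero (by omega) (by omega))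
        have hB1 : (1 : ℝ) ≤ Real.sqrt ((K * (τ (i + 1) - τ i) : ℕ)) := by
          rw [show (1 : ℝ) = Real.sqrt 1 from Real.sqrt_one.symm]
          exact Real.sqrt_le_sqrt (by exact_mod_cast hKΔ)
        rw [hIco]
        refine phase_bound_s1 δ S (τ i) (τ (i + 1) - 1) K hK (by omega) _
          (Real.sqrt_nonneg _) ?_ ?_ ?_ ?_ ?_
          (fun m hm => harmonic_sum_le K m hK hm)
          (fun A g => sum_inv_rank_le_s1 A.card A g rfl)
        · exact fun t h1 h2 => hSne t (hmemT t h1 h2)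
        · exact fun t h1 h2 => hSnested i hi t h1 (by omega)
        · intro t h1 h2 a haS
          have haK := (hGt t h1 h2 a haS).1
          rw [hδ t a]
          exact sub_nonneg.mpr (Finset.le_sup' (μ t) haK)
        · intro t h1 h2 a haS
          obtain ⟨haK, hns⟩ := hGt t h1 h2 a haS
          rcases eq_or_lt_of_le h1 with heq | hlt'
          · rw [← heq, Finset.Icc_self, Finset.sum_singleton]
            refine le_trans ?_ hB1
            rw [hδ (τ i) a]
            unfold worstGap
            have htT := hmemT (τ i) le_rfl (by omega)
            have hsup : (Finset.Icc 1 K).sup' (Finset.nonempty_Icc.mpr hK) (μ (τ i)) ≤ 1 :=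
              Finset.sup'_le _ _ fun b hb => (hμ (τ i) htT b hb).2
            have hlo : 0 ≤ μ (τ i) a := (hμ (τ i) htT a haK).1
            linarith
          · have hnot := hns (τ i) t le_rfl hlt' le_rfl
            unfold SigRegret at hnot
            push_neg at hnot
            refine hnot.le.trans (Real.sqrt_le_sqrt ?_)
            have : K * (t - τ i) ≤ K * (τ (i + 1) - τ i) :=
              Nat.mul_le_mul_left K (by omega)
            exact_mod_cast this
        · have hsub : S (τ i) ⊆ Finset.Icc 1 K :=
            fun a ha => (hGt (τ i) le_rfl (by omega) a ha).1
          calc (S (τ i)).card ≤ (Finset.Icc 1 K).card := Finset.card_le_card hsub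
            _ = K := by rw [Nat.card_Icc]; omega
    _ = (1 + Real.log K) *
          ∑ i ∈ Finset.range (L + 1), Real.sqrt ((K * (τ (i + 1) - τ i) : ℕ)) := by
        rw [Finset.mul_sum]
end

section
/- Let K ≥ 1, T ≥ 1 be integers and let μ_t(a) ∈ [0,1] with significant shift times τ_0 = 1 < τ_1 < … < τ_{L̃} and τ_{L̃+1} := T+1 as defined in the context, and let V := Σ_{t=2}^{T} max_{a∈[K]} |μ_t(a) − μ_{t−1}(a)| be the total variation. Then Σ_{i=0}^{L̃} √(K·(τ_{i+1} − τ_i)) ≤ √(K·T) + (4·K·V)^{1/3} · T^{2/3}. -/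
lemma tele_sum (f : ℕ → ℝ) {m t : ℕ} (h : m ≤ t) :
    f t = f m + ∑ s ∈ Finset.Ioc m t, (f s - f (s - 1)) := by
  induction t, h using Nat.le_induction with
  | base => simp
  | succ t ht ih =>
      rw [Finset.sum_Ioc_succ_top ht]
      simp only [Nat.add_sub_cancel]
      linarith

lemma sup'_sub_sup'_abs {s : Finset ℕ} (H : s.Nonempty) (f g : ℕ → ℝ) :
    |s.sup' H f - s.sup' H g| ≤ s.sup' H (fun a => |f a - g a|) := by
  rw [abs_sub_le_iff]
  constructor
  · obtain ⟨a, ha, hfa⟩ := Finset.exists_mem_eq_sup' H f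
    rw [hfa]
    have h1 : |f a - g a| ≤ s.sup' H (fun a => |f a - g a|) :=
      Finset.le_sup' (fun a => |f a - g a|) ha
    have h2 : g a ≤ s.sup' H g := Finset.le_sup' _ ha
    have h3 : f a - g a ≤ |f a - g a| := le_abs_self _
    linarith
  · obtain ⟨a, ha, hga⟩ := Finset.exists_mem_eq_sup' H g
    rw [hga]
    have h1 : |f a - g a| ≤ s.sup' H (fun a => |f a - g a|) :=
      Finset.le_sup' (fun a => |f a - g a|) ha
    have h2 : f a ≤ s.sup' H f := Finset.le_sup' _ ha
    have h3 : g a - f a ≤ |f a - g a| := by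
      rw [abs_sub_comm]; exact le_abs_self _
    linarith

lemma tau_mono' {τ : ℕ → ℕ} {N : ℕ} (h : ∀ i < N, τ i ≤ τ (i + 1)) :
    ∀ j ≤ N, ∀ i ≤ j, τ i ≤ τ j := by
  intro j
  induction j with
  | zero => intro _ i hi; rw [Nat.le_zero.mp hi]
  | succ j ih =>
      intro hj i hi
      rcases Nat.eq_or_lt_of_le hi with rfl | hlt
      · exact le_rfl
      · exact le_trans (ih (by omega) i (by omega)) (h j (by omega))

lemma sum_Ioc_partition (g : ℕ → ℝ) (τ : ℕ → ℕ) (N : ℕ) (h : ∀ i < N, τ i ≤ τ (i + 1)) :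
    ∑ i ∈ Finset.range N, ∑ s ∈ Finset.Ioc (τ i) (τ (i + 1)), g s
      = ∑ s ∈ Finset.Ioc (τ 0) (τ N), g s := by
  induction N with
  | zero => simp
  | succ N ih =>
      rw [Finset.sum_range_succ, ih (fun i hi => h i (by omega)),
        Finset.sum_Ioc_consecutive g (tau_mono' h N (by omega) 0 (by omega)) (h N (by omega))]

set_option maxHeartbeats 1000000 in
/-- Corollary 3, deterministic content: with total variation
`V = Σ_{t=2}^{T} max_a |μ_t(a) − μ_{t−1}(a)|`,
`Σ_{i=0}^{L} √(K·(τ_{i+1} − τ_i)) ≤ √(K·T) + (4·K·V)^{1/3}·T^{2/3}`. -/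
theorem sum_sqrt_phase_lengths_le_total_variation
    (K T : ℕ) (hK : 1 ≤ K) (hT : 1 ≤ T)
    (μ : ℕ → ℕ → ℝ)
    (hμ : ∀ t ∈ Finset.Icc 1 T, ∀ a ∈ Finset.Icc 1 K, μ t a ∈ Set.Icc (0 : ℝ) 1)
    (δ : ℕ → ℕ → ℝ) (hδ : ∀ t a, δ t a = worstGap K hK μ t a)
    -- significant shift times τ_0 = 1 < τ_1 < … < τ_L, with τ_{L+1} = T + 1
    (L : ℕ) (τ : ℕ → ℕ)
    (hτ0 : τ 0 = 1) (hτlast : τ (L + 1) = T + 1)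
    (hτmono : ∀ i ≤ L, τ i < τ (i + 1))
    -- each recorded shift time τ_{i+1} (i < L) is a significant shift: every arm incurs
    -- significant regret on some subinterval of [τ_i, τ_{i+1}]
    (hshift : ∀ i < L, ∀ a ∈ Finset.Icc 1 K, ∃ s₁ s₂, τ i ≤ s₁ ∧ s₁ < s₂ ∧ s₂ ≤ τ (i + 1) ∧
      SigRegret K δ a s₁ s₂)
    -- minimality: strictly before the end of a phase, some arm has no significant regret yet
    (hmin : ∀ i ≤ L, ∀ t, τ i ≤ t → t < τ (i + 1) → t ≤ T →
      ∃ a ∈ Finset.Icc 1 K, ∀ s₁ s₂, τ i ≤ s₁ → s₁ < s₂ → s₂ ≤ t → ¬ SigRegret K δ a s₁ s₂)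
    -- the total variation
    (V : ℝ)
    (hV : V = ∑ t ∈ Finset.Icc 2 T,
      (Finset.Icc 1 K).sup' (Finset.nonempty_Icc.mpr hK) (fun a => |μ t a - μ (t - 1) a|)) :
    ∑ i ∈ Finset.range (L + 1), Real.sqrt ((K * (τ (i + 1) - τ i) : ℕ)) ≤
      Real.sqrt ((K * T : ℕ)) + (4 * (K : ℝ) * V) ^ ((1 : ℝ) / 3) * (T : ℝ) ^ ((2 : ℝ) / 3) := by
  classical
  have hA : (Finset.Icc 1 K).Nonempty := Finset.nonempty_Icc.mpr hK
  set S : ℕ → ℝ := fun t => (Finset.Icc 1 K).sup' hA (μ t) with hS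
  set M : ℕ → ℝ := fun t => (Finset.Icc 1 K).sup' hA (fun a => |μ t a - μ (t - 1) a|) with hMdef
  have hwg : ∀ t a', δ t a' = S t - μ t a' := by
    intro t a'; rw [hδ]; rfl
  have hMnn : ∀ t, 0 ≤ M t := fun t =>
    le_trans (abs_nonneg (μ t 1 - μ (t - 1) 1))
      (Finset.le_sup' (fun a => |μ t a - μ (t - 1) a|) (Finset.mem_Icc.mpr ⟨le_rfl, hK⟩))
  have hV' : V = ∑ t ∈ Finset.Icc 2 T, M t := hV
  set Vi : ℕ → ℝ := fun i => ∑ s ∈ Finset.Ioc (τ i) (τ (i + 1)), M s with hVidef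
  have hVinn : ∀ i, 0 ≤ Vi i := fun i => Finset.sum_nonneg fun s _ => hMnn s
  have hτle : ∀ i < L + 1, τ i ≤ τ (i + 1) := fun i hi => (hτmono i (by omega)).le
  have hmono := tau_mono' hτle
  have hτ1 : 1 ≤ τ L := hτ0 ▸ hmono L (by omega) 0 (Nat.zero_le _)
  have hτT : τ L ≤ T := by have := hτmono L le_rfl; omega
  have hVnn : 0 ≤ V := by
    rw [hV']; exact Finset.sum_nonneg fun t _ => hMnn t
  have h4KVi : ∀ i, (0:ℝ) ≤ 4 * (K : ℝ) * Vi i :=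
    fun i => mul_nonneg (by positivity) (hVinn i)
  have h4KV : (0:ℝ) ≤ 4 * (K : ℝ) * V := mul_nonneg (by positivity) hVnn
  have hsumVi : ∑ i ∈ Finset.range L, Vi i ≤ V := by
    rw [hV', hVidef]
    rw [sum_Ioc_partition M τ L (fun i hi => hτle i (by omega))]
    apply Finset.sum_le_sum_of_subset_of_nonneg
    · intro s hs
      simp only [Finset.mem_Ioc] at hs
      simp only [Finset.mem_Icc]
      omega
    · intro t _ _; exact hMnn t
  -- key estimate per completed phase
  have key : ∀ i < L, Real.sqrt K ≤ 4 * Vi i * Real.sqrt ((τ (i + 1) - τ i : ℕ)) := by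
    intro i hi
    obtain ⟨a, ha, hsup⟩ := Finset.exists_mem_eq_sup' hA (μ (τ i))
    obtain ⟨s₁, s₂, hs1, hs2, hs3, hsig⟩ := hshift i hi a ha
    unfold SigRegret at hsig
    set m := s₂ - s₁ with hm
    have hm1 : 1 ≤ m := by omega
    have hcard : (Finset.Icc s₁ s₂).card = m + 1 := by rw [Nat.card_Icc]; omega
    have hne : (Finset.Icc s₁ s₂).Nonempty := ⟨s₁, Finset.mem_Icc.mpr ⟨le_rfl, hs2.le⟩⟩
    have hmne : ((m : ℝ) + 1) ≠ 0 := by positivity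
    have hsum : ∑ _t ∈ Finset.Icc s₁ s₂, (Real.sqrt ((K * m : ℕ)) / ((m : ℝ) + 1))
        ≤ ∑ t ∈ Finset.Icc s₁ s₂, δ t a := by
      rw [Finset.sum_const, hcard, nsmul_eq_mul]
      push_cast
      rw [mul_div_cancel₀ _ hmne]
      exact_mod_cast hsig
    obtain ⟨t, ht, hδt⟩ := Finset.exists_le_of_sum_le hne hsum
    rw [Finset.mem_Icc] at ht
    have hti : τ i ≤ t := le_trans hs1 ht.1
    -- telescoping: δ t a ≤ 2 * Vi i
    have hδ0 : δ (τ i) a = 0 := by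
      rw [hwg]
      have : S (τ i) = μ (τ i) a := hsup
      linarith
    have htel := tele_sum (fun s => δ s a) hti
    have hstep : ∀ s ∈ Finset.Ioc (τ i) t, δ s a - δ (s - 1) a ≤ 2 * M s := by
      intro s _
      have e1 : |S s - S (s - 1)| ≤ M s := sup'_sub_sup'_abs hA (μ s) (μ (s - 1))
      have e2 : |μ s a - μ (s - 1) a| ≤ M s :=
        Finset.le_sup' (fun a => |μ s a - μ (s - 1) a|) ha
      rw [hwg, hwg]
      have e1' := abs_le.mp e1
      have e2' := abs_le.mp e2
      have := e1'.2
      have := e2'.1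
      linarith
    have hsub : Finset.Ioc (τ i) t ⊆ Finset.Ioc (τ i) (τ (i + 1)) :=
      Finset.Ioc_subset_Ioc le_rfl (le_trans ht.2 hs3)
    have hδt2 : δ t a ≤ 2 * Vi i := by
      rw [htel, hδ0]
      have h1 : ∑ s ∈ Finset.Ioc (τ i) t, (δ s a - δ (s - 1) a)
          ≤ ∑ s ∈ Finset.Ioc (τ i) t, 2 * M s := Finset.sum_le_sum hstep
      have h2 : ∑ s ∈ Finset.Ioc (τ i) t, 2 * M s
          ≤ ∑ s ∈ Finset.Ioc (τ i) (τ (i + 1)), 2 * M s :=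
        Finset.sum_le_sum_of_subset_of_nonneg hsub
          (fun s _ _ => by have := hMnn s; linarith)
      have h3 : ∑ s ∈ Finset.Ioc (τ i) (τ (i + 1)), 2 * M s = 2 * Vi i := by
        rw [hVidef, Finset.mul_sum]
      linarith
    -- now convert: √(Km)/(m+1) ≤ 2 Vi  ⟹  √K ≤ 4 Vi √m ≤ 4 Vi √n
    have hKm : Real.sqrt ((K * m : ℕ)) = Real.sqrt K * Real.sqrt m := by
      push_cast
      exact Real.sqrt_mul (Nat.cast_nonneg K) _
    have hc : Real.sqrt K * Real.sqrt m / ((m : ℝ) + 1) ≤ 2 * Vi i := by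
      rw [← hKm]; exact le_trans hδt hδt2
    have hm0 : (0:ℝ) < Real.sqrt m := Real.sqrt_pos.mpr (by exact_mod_cast hm1)
    have hmsq : Real.sqrt m * Real.sqrt m = (m : ℝ) :=
      Real.mul_self_sqrt (Nat.cast_nonneg m)
    have hm1R : (1:ℝ) ≤ (m : ℝ) := by exact_mod_cast hm1
    have hkey1 : Real.sqrt K ≤ 4 * Vi i * Real.sqrt m := by
      have h4 : Real.sqrt K * Real.sqrt m ≤ 2 * Vi i * ((m : ℝ) + 1) :=
        (div_le_iff₀ (by positivity)).mp hc
      have h5 : 2 * Vi i * ((m : ℝ) + 1) ≤ 4 * Vi i * (m : ℝ) := by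
        have := hVinn i; nlinarith
      have h6 : Real.sqrt K * Real.sqrt m ≤ 4 * Vi i * Real.sqrt m * Real.sqrt m := by
        rw [mul_assoc (4 * Vi i), hmsq]; linarith
      exact le_of_mul_le_mul_right h6 hm0
    have hmn : Real.sqrt m ≤ Real.sqrt ((τ (i + 1) - τ i : ℕ)) := by
      apply Real.sqrt_le_sqrt
      exact_mod_cast (by omega : m ≤ τ (i + 1) - τ i)
    have := hVinn i
    nlinarith [Real.sqrt_nonneg (m : ℝ)]
  -- per-term bound for completed phases
  have hterm : ∀ i ∈ Finset.range L,
      Real.sqrt ((K * (τ (i + 1) - τ i) : ℕ)) ≤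
        (4 * (K : ℝ) * Vi i) ^ ((1 : ℝ) / 3) *
          ((τ (i + 1) - τ i : ℕ) : ℝ) ^ ((2 : ℝ) / 3) := by
    intro i hi
    rw [Finset.mem_range] at hi
    have hk := key i hi
    set n : ℝ := ((τ (i + 1) - τ i : ℕ) : ℝ) with hn
    have hn0 : (0:ℝ) ≤ n := Nat.cast_nonneg _
    have hKn : Real.sqrt ((K * (τ (i + 1) - τ i) : ℕ)) = Real.sqrt K * Real.sqrt n := by
      rw [hn]; push_cast
      exact Real.sqrt_mul (Nat.cast_nonneg K) _
    rw [hKn]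
    have hVinn' := hVinn i
    have hB0 : (0:ℝ) ≤ (4 * (K : ℝ) * Vi i) ^ ((1 : ℝ) / 3) * n ^ ((2 : ℝ) / 3) := by
      apply mul_nonneg
      · exact Real.rpow_nonneg (h4KVi i) _
      · exact Real.rpow_nonneg hn0 _
    apply le_of_pow_le_pow_left₀ (n := 3) (by norm_num) hB0
    have c1 : ((4 * (K : ℝ) * Vi i) ^ ((1 : ℝ) / 3)) ^ (3 : ℕ) = 4 * (K : ℝ) * Vi i := by
      rw [← Real.rpow_natCast ((4 * (K : ℝ) * Vi i) ^ ((1 : ℝ) / 3)) 3,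
        ← Real.rpow_mul (h4KVi i)]
      norm_num
    have c2 : (n ^ ((2 : ℝ) / 3)) ^ (3 : ℕ) = n ^ (2 : ℕ) := by
      rw [← Real.rpow_natCast (n ^ ((2 : ℝ) / 3)) 3, ← Real.rpow_mul hn0,
        ← Real.rpow_natCast n 2]
      norm_num
    rw [show ((4 * (K : ℝ) * Vi i) ^ ((1 : ℝ) / 3) * n ^ ((2 : ℝ) / 3)) ^ (3 : ℕ)
        = 4 * (K : ℝ) * Vi i * n ^ (2 : ℕ) by rw [mul_pow, c1, c2]]
    have hsK : Real.sqrt K ^ 2 = (K : ℝ) := Real.sq_sqrt (Nat.cast_nonneg K)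
    have hsn : Real.sqrt n ^ 2 = n := Real.sq_sqrt hn0
    have hKn2 : (Real.sqrt K * Real.sqrt n) ^ (3 : ℕ)
        = (K : ℝ) * n * (Real.sqrt K * Real.sqrt n) := by
      have e : (Real.sqrt K * Real.sqrt n) ^ (3 : ℕ)
          = (Real.sqrt K ^ 2 * Real.sqrt n ^ 2) * (Real.sqrt K * Real.sqrt n) := by ring
      rw [e, hsK, hsn]
    rw [hKn2]
    have step := mul_le_mul_of_nonneg_left hk
      (show (0:ℝ) ≤ (K : ℝ) * n * Real.sqrt n by positivity)
    calc (K : ℝ) * n * (Real.sqrt K * Real.sqrt n)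
        = (K : ℝ) * n * Real.sqrt n * Real.sqrt K := by ring
      _ ≤ (K : ℝ) * n * Real.sqrt n * (4 * Vi i * Real.sqrt n) := step
      _ = 4 * (K : ℝ) * Vi i * (n * (Real.sqrt n * Real.sqrt n)) := by ring
      _ = 4 * (K : ℝ) * Vi i * n ^ (2 : ℕ) := by
          rw [Real.mul_self_sqrt hn0]; ring
  -- Hölder
  have hpq : Real.HolderConjugate 3 (3 / 2) := Real.holderConjugate_iff.mpr ⟨by norm_num, by norm_num⟩
  have holder := Real.inner_le_Lp_mul_Lq_of_nonneg (s := Finset.range L)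
    (f := fun i => (4 * (K : ℝ) * Vi i) ^ ((1 : ℝ) / 3))
    (g := fun i => ((τ (i + 1) - τ i : ℕ) : ℝ) ^ ((2 : ℝ) / 3)) hpq
    (fun i _ => Real.rpow_nonneg (h4KVi i) _)
    (fun i _ => Real.rpow_nonneg (Nat.cast_nonneg _) _)
  have e3 : ∑ i ∈ Finset.range L, ((4 * (K : ℝ) * Vi i) ^ ((1 : ℝ) / 3)) ^ (3 : ℝ)
      = ∑ i ∈ Finset.range L, (4 * (K : ℝ) * Vi i) := by
    apply Finset.sum_congr rfl
    intro i _
    rw [← Real.rpow_mul (h4KVi i)]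
    norm_num
  have e4 : ∑ i ∈ Finset.range L, (((τ (i + 1) - τ i : ℕ) : ℝ) ^ ((2 : ℝ) / 3)) ^ ((3 : ℝ) / 2)
      = ∑ i ∈ Finset.range L, ((τ (i + 1) - τ i : ℕ) : ℝ) := by
    apply Finset.sum_congr rfl
    intro i _
    rw [← Real.rpow_mul (Nat.cast_nonneg _)]
    norm_num
  rw [e3, e4] at holder
  have esum : ∑ i ∈ Finset.range L, ((τ (i + 1) - τ i : ℕ) : ℝ) ≤ (T : ℝ) := by
    have : ∀ i ∈ Finset.range L, ((τ (i + 1) - τ i : ℕ) : ℝ) = (τ (i + 1) : ℝ) - (τ i : ℝ) := by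
      intro i hi
      rw [Finset.mem_range] at hi
      rw [Nat.cast_sub (hτle i (by omega))]
    rw [Finset.sum_congr rfl this, Finset.sum_range_sub (fun i => ((τ i : ℕ) : ℝ)), hτ0]
    have h2 : (τ L : ℝ) ≤ (T : ℝ) := by exact_mod_cast hτT
    push_cast
    linarith
  have eV : ∑ i ∈ Finset.range L, (4 * (K : ℝ) * Vi i) ≤ 4 * (K : ℝ) * V := by
    rw [← Finset.mul_sum]
    have hK0 : (0:ℝ) ≤ 4 * (K : ℝ) := by positivity
    nlinarith
  have hR1 : (∑ i ∈ Finset.range L, (4 * (K : ℝ) * Vi i)) ^ ((1 : ℝ) / 3)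
      ≤ (4 * (K : ℝ) * V) ^ ((1 : ℝ) / 3) :=
    Real.rpow_le_rpow (Finset.sum_nonneg fun i _ => h4KVi i) eV (by norm_num)
  have hR2 : (∑ i ∈ Finset.range L, ((τ (i + 1) - τ i : ℕ) : ℝ)) ^ ((1 : ℝ) / (3 / 2))
      ≤ (T : ℝ) ^ ((2 : ℝ) / 3) := by
    rw [show (1 : ℝ) / (3 / 2) = 2 / 3 by norm_num]
    exact Real.rpow_le_rpow (Finset.sum_nonneg fun i _ => Nat.cast_nonneg _) esum (by norm_num)
  have hmain : ∑ i ∈ Finset.range L, Real.sqrt ((K * (τ (i + 1) - τ i) : ℕ))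
      ≤ (4 * (K : ℝ) * V) ^ ((1 : ℝ) / 3) * (T : ℝ) ^ ((2 : ℝ) / 3) := by
    calc ∑ i ∈ Finset.range L, Real.sqrt ((K * (τ (i + 1) - τ i) : ℕ))
        ≤ ∑ i ∈ Finset.range L, (4 * (K : ℝ) * Vi i) ^ ((1 : ℝ) / 3) *
            ((τ (i + 1) - τ i : ℕ) : ℝ) ^ ((2 : ℝ) / 3) := Finset.sum_le_sum hterm
      _ ≤ (∑ i ∈ Finset.range L, (4 * (K : ℝ) * Vi i)) ^ ((1 : ℝ) / 3) *
            (∑ i ∈ Finset.range L, ((τ (i + 1) - τ i : ℕ) : ℝ)) ^ ((1 : ℝ) / (3 / 2)) := by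
          convert holder using 2 <;> norm_num
      _ ≤ (4 * (K : ℝ) * V) ^ ((1 : ℝ) / 3) * (T : ℝ) ^ ((2 : ℝ) / 3) := by
          apply mul_le_mul hR1 hR2
          · exact Real.rpow_nonneg (Finset.sum_nonneg fun i _ => Nat.cast_nonneg _) _
          · exact Real.rpow_nonneg h4KV _
  have hlast : Real.sqrt ((K * (τ (L + 1) - τ L) : ℕ)) ≤ Real.sqrt ((K * T : ℕ)) := by
    apply Real.sqrt_le_sqrt
    have : K * (τ (L + 1) - τ L) ≤ K * T := Nat.mul_le_mul_left K (by omega)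
    exact_mod_cast this
  rw [Finset.sum_range_succ]
  linarith
end

section
/- Let K ≥ 1, T ≥ 1 be integers and let μ_t(a) ∈ [0,1] with significant shift times τ_0 = 1 < τ_1 < … < τ_{L̃} and τ_{L̃+1} := T+1 as defined in the context. For any phase [τ_i, τ_{i+1}) with τ_{i+1} ≤ T (i.e., a phase ending in a recorded significant shift), the total variation over the phase satisfies Σ_{t=τ_i+1}^{τ_{i+1}} max_{a∈[K]} |μ_t(a) − μ_{t−1}(a)| ≥ (1/4)·√(K/(τ_{i+1} − τ_i)). -/
open Finset

noncomputable def roundVariation (K : ℕ) (hK : 1 ≤ K) (μ : ℕ → ℕ → ℝ) (t : ℕ) : ℝ :=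
  (Icc 1 K).sup' (nonempty_Icc.mpr hK) (fun a => |μ t a - μ (t - 1) a|)

theorem Finset.sup'_le_sup'_add_sup'_abs_sub {ι α : Type*} [AddCommGroup α] [LinearOrder α]
    [IsOrderedAddMonoid α] {s : Finset ι} (H : s.Nonempty) (f g : ι → α) :
    s.sup' H f ≤ s.sup' H g + s.sup' H (fun i => |g i - f i|) :=
  sup'_le H f fun i hi => calc
    f i ≤ g i + |g i - f i| := sub_le_iff_le_add'.mp (abs_sub_comm (g i) (f i) ▸ le_abs_self _)
    _ ≤ _ := add_le_add (le_sup' g hi) (le_sup' (fun i => |g i - f i|) hi)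

theorem worstGap_pred_sub_worstGap_le (K : ℕ) (hK : 1 ≤ K) (μ : ℕ → ℕ → ℝ) (t : ℕ)
    {a : ℕ} (ha : a ∈ Icc 1 K) :
    worstGap K hK μ (t - 1) a - worstGap K hK μ t a ≤ 2 * roundVariation K hK μ t := by
  have hsup := (Icc 1 K).sup'_le_sup'_add_sup'_abs_sub (nonempty_Icc.mpr hK) (μ (t - 1)) (μ t)
  have ha' : μ t a - μ (t - 1) a ≤ _ :=
    (le_abs_self _).trans (le_sup' (fun a => |μ t a - μ (t - 1) a|) ha)
  unfold worstGap roundVariation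
  linarith

theorem roundVariation_nonneg (K : ℕ) (hK : 1 ≤ K) (μ : ℕ → ℕ → ℝ) (t : ℕ) :
    0 ≤ roundVariation K hK μ t :=
  (abs_nonneg _).trans (le_sup' (fun a => |μ t a - μ (t - 1) a|) (left_mem_Icc.mpr hK))

theorem sub_le_sum_Icc_of_pred_sub_le {α : Type*} [AddCommGroup α] [PartialOrder α]
    [IsOrderedAddMonoid α] {f g : ℕ → α} (hfg : ∀ t, f (t - 1) - f t ≤ g t) {a N : ℕ}
    (haN : a ≤ N) : f a - f N ≤ ∑ t ∈ Icc (a + 1) N, g t := by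
  induction N, haN using Nat.le_induction with
  | base => simp
  | succ N _ ih =>
    rw [sum_Icc_succ_top (by omega)]
    calc f a - f (N + 1) = (f a - f N) + (f (N + 1 - 1) - f (N + 1)) := by simp
      _ ≤ _ := add_le_add ih (hfg _)

theorem SigRegret.exists_sqrt_div_le {K : ℕ} {δ : ℕ → ℕ → ℝ} {a s₁ s₂ : ℕ}
    (h : SigRegret K δ a s₁ s₂) (hs : s₁ ≤ s₂) :
    ∃ t ∈ Icc s₁ s₂, √((K * (s₂ - s₁) : ℕ)) / ((s₂ - s₁ : ℕ) + 1) ≤ δ t a := by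
  refine exists_le_of_sum_le (nonempty_Icc.mpr hs) (h.trans_eq' ?_)
  rw [sum_const, Nat.card_Icc, nsmul_eq_mul, show s₂ + 1 - s₁ = (s₂ - s₁) + 1 by omega]
  push_cast
  field_simp

theorem sqrt_div_le_two_mul_sqrt_mul_div_add_one {K m Δ : ℝ} (hK : 0 ≤ K) (hm : 1 ≤ m)
    (hmΔ : m ≤ Δ) : √(K / Δ) ≤ 2 * (√(K * m) / (m + 1)) := by
  have hΔ : 0 < Δ := by linarith
  rw [mul_div_assoc', le_div_iff₀ (by linarith)]
  calc √(K / Δ) * (m + 1) ≤ √(K / Δ) * (2 * √(m * Δ)) := by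
        gcongr
        -- `m + 1 ≤ 2 m ≤ 2 √(m Δ)`
        have : m ≤ √(m * Δ) := Real.le_sqrt_of_sq_le (by nlinarith)
        linarith
    _ = 2 * √(K * m) := by
        rw [mul_left_comm, ← Real.sqrt_mul (by positivity)]
        field_simp

theorem phase_total_variation_lower_bound_general
    (K T : ℕ) (hK : 1 ≤ K)
    (μ : ℕ → ℕ → ℝ)
    (δ : ℕ → ℕ → ℝ) (hδ : ∀ t a, δ t a = worstGap K hK μ t a)
    -- significant shift times τ_0 = 1 < τ_1 < … < τ_L, with τ_{L+1} = T + 1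
    (L : ℕ) (τ : ℕ → ℕ)
    (hτlast : τ (L + 1) = T + 1)
    -- each recorded shift time τ_{i+1} (i < L) is a significant shift: every arm incurs
    -- significant regret on some subinterval of [τ_i, τ_{i+1}]
    (hshift : ∀ i < L, ∀ a ∈ Finset.Icc 1 K, ∃ s₁ s₂, τ i ≤ s₁ ∧ s₁ < s₂ ∧ s₂ ≤ τ (i + 1) ∧
      SigRegret K δ a s₁ s₂)
    :
    ∀ i ≤ L, τ (i + 1) ≤ T →
      (1 / 4) * Real.sqrt ((K : ℝ) / ((τ (i + 1) - τ i : ℕ) : ℝ)) ≤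
        ∑ t ∈ Finset.Icc (τ i + 1) (τ (i + 1)),
          (Finset.Icc 1 K).sup' (Finset.nonempty_Icc.mpr hK)
            (fun a => |μ t a - μ (t - 1) a|) := by
  intro i hiL hτT
  have hi : i < L := hiL.lt_of_ne (by rintro rfl; omega)
  obtain ⟨a, ha, hbest⟩ := exists_mem_eq_sup' (nonempty_Icc.mpr hK) (μ (τ (i + 1)))
  obtain ⟨s₁, s₂, hs₁, hs₁₂, hs₂, hsig⟩ := hshift i hi a ha
  obtain ⟨t₀, ht₀, hgap⟩ := hsig.exists_sqrt_div_le hs₁₂.le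
  rw [mem_Icc] at ht₀
  have hgap_zero : δ (τ (i + 1)) a = 0 := by simp [hδ, worstGap, hbest]
  have htel : δ t₀ a - δ (τ (i + 1)) a ≤
      ∑ t ∈ Icc (t₀ + 1) (τ (i + 1)), 2 * roundVariation K hK μ t :=
    sub_le_sum_Icc_of_pred_sub_le (f := fun t => δ t a) (fun t => by
      simpa only [hδ] using worstGap_pred_sub_worstGap_le K hK μ t ha) (by omega)
  have hwiden : ∑ t ∈ Icc (t₀ + 1) (τ (i + 1)), roundVariation K hK μ t ≤
      ∑ t ∈ Icc (τ i + 1) (τ (i + 1)), roundVariation K hK μ t :=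
    sum_le_sum_of_subset_of_nonneg (Icc_subset_Icc (by omega) le_rfl)
      fun t _ _ => roundVariation_nonneg K hK μ t
  have harith := sqrt_div_le_two_mul_sqrt_mul_div_add_one (K.cast_nonneg (α := ℝ))
    (m := ((s₂ - s₁ : ℕ) : ℝ)) (Δ := ((τ (i + 1) - τ i : ℕ) : ℝ))
    (by exact_mod_cast (by omega : 1 ≤ s₂ - s₁))
    (by exact_mod_cast (by omega : s₂ - s₁ ≤ τ (i + 1) - τ i))
  rw [← mul_sum] at htel
  push_cast at hgap harith ⊢
  change _ ≤ ∑ t ∈ Icc (τ i + 1) (τ (i + 1)), roundVariation K hK μ t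
  linarith

/-- per-phase total-variation lower bound used for Corollary 3: any phase
`[τ_i, τ_{i+1})` ending in a recorded significant shift (`τ_{i+1} ≤ T`) carries total
variation at least `(1/4)·√(K/(τ_{i+1} − τ_i))`. -/
theorem phase_total_variation_lower_bound
    (K T : ℕ) (hK : 1 ≤ K) (hT : 1 ≤ T)
    (μ : ℕ → ℕ → ℝ)
    (hμ : ∀ t ∈ Finset.Icc 1 T, ∀ a ∈ Finset.Icc 1 K, μ t a ∈ Set.Icc (0 : ℝ) 1)
    (δ : ℕ → ℕ → ℝ) (hδ : ∀ t a, δ t a = worstGap K hK μ t a)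
    -- significant shift times τ_0 = 1 < τ_1 < … < τ_L, with τ_{L+1} = T + 1
    (L : ℕ) (τ : ℕ → ℕ)
    (hτ0 : τ 0 = 1) (hτlast : τ (L + 1) = T + 1)
    (hτmono : ∀ i ≤ L, τ i < τ (i + 1))
    -- each recorded shift time τ_{i+1} (i < L) is a significant shift: every arm incurs
    -- significant regret on some subinterval of [τ_i, τ_{i+1}]
    (hshift : ∀ i < L, ∀ a ∈ Finset.Icc 1 K, ∃ s₁ s₂, τ i ≤ s₁ ∧ s₁ < s₂ ∧ s₂ ≤ τ (i + 1) ∧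
      SigRegret K δ a s₁ s₂)
    -- minimality: strictly before the end of a phase, some arm has no significant regret yet
    (hmin : ∀ i ≤ L, ∀ t, τ i ≤ t → t < τ (i + 1) → t ≤ T →
      ∃ a ∈ Finset.Icc 1 K, ∀ s₁ s₂, τ i ≤ s₁ → s₁ < s₂ → s₂ ≤ t → ¬ SigRegret K δ a s₁ s₂)
    :
    ∀ i ≤ L, τ (i + 1) ≤ T →
      (1 / 4) * Real.sqrt ((K : ℝ) / ((τ (i + 1) - τ i : ℕ) : ℝ)) ≤
        ∑ t ∈ Finset.Icc (τ i + 1) (τ (i + 1)),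
          (Finset.Icc 1 K).sup' (Finset.nonempty_Icc.mpr hK)
            (fun a => |μ t a - μ (t - 1) a|) :=
  phase_total_variation_lower_bound_general K T hK μ δ hδ L τ hτlast hshift
end

section
/- Let X_1, …, X_n be real random variables forming a martingale difference sequence with respect to a filtration F_0 ⊆ F_1 ⊆ … ⊆ F_n (i.e., each X_i is F_i-measurable and E[X_i | F_{i−1}] = 0 almost surely). Assume X_i ≤ R almost surely for all i, and that Σ_{i=1}^n E[X_i² | F_{i−1}] ≤ V_n almost surely for some constant V_n ≥ 0. Then for any δ ∈ (0,1), with probability at least 1 − δ: Σ_{i=1}^n X_i ≤ (e − 1)·(√(V_n·log(1/δ)) + R·log(1/δ)). -/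
open MeasureTheory

lemma expQuad (y : ℝ) (hy : y ≤ 1) : Real.exp y ≤ 1 + y + (13/18) * y^2 := by
  rcases le_or_gt (-1) y with h | h
  · have hb := Real.exp_bound (x := y) (abs_le.2 ⟨h, hy⟩) (n := 3) (by norm_num)
    have hs : ∑ m ∈ Finset.range 3, y ^ m / m.factorial = 1 + y + y^2/2 := by
      rw [Finset.sum_range_succ, Finset.sum_range_succ, Finset.sum_range_succ,
        Finset.sum_range_zero]
      norm_num [Nat.factorial]
    rw [hs] at hb
    norm_num [Nat.factorial] at hb
    have h3 : |y|^3 ≤ y^2 := by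
      have h4 : |y| ^ 3 = |y| * |y|^2 := by ring
      rw [h4, sq_abs]
      nlinarith [abs_le.2 ⟨h, hy⟩, abs_nonneg y, sq_nonneg y]
    have := abs_le.1 hb
    nlinarith [h3, abs_nonneg y]
  · have h1 : Real.exp y ≤ Real.exp (-1) := Real.exp_le_exp.2 (by linarith)
    have h2 : Real.exp (-1) ≤ 13/18 := by
      rw [Real.exp_neg, inv_le_comm₀ (Real.exp_pos 1) (by norm_num)]
      calc (13/18 : ℝ)⁻¹ ≤ 2.7 := by norm_num
        _ ≤ Real.exp 1 := by linarith [Real.exp_one_gt_d9.le]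
    nlinarith [sq_nonneg y, h1, h2]

lemma freedman_mgf_aux
    {Ω : Type*} {m0 : MeasurableSpace Ω} (ℙ : Measure Ω) [IsProbabilityMeasure ℙ]
    (n : ℕ) (F : Filtration ℕ m0)
    (X : ℕ → Ω → ℝ)
    (hadapted : ∀ i ∈ Finset.Icc 1 n, StronglyMeasurable[F i] (X i))
    (hint : ∀ i ∈ Finset.Icc 1 n, Integrable (X i) ℙ)
    (hint2 : ∀ i ∈ Finset.Icc 1 n, Integrable (fun ω => (X i ω) ^ 2) ℙ)
    (hmds : ∀ i ∈ Finset.Icc 1 n, ℙ[X i|F (i - 1)] =ᵐ[ℙ] 0)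
    (R : ℝ) (hR : 0 < R)
    (hbdd : ∀ i ∈ Finset.Icc 1 n, ∀ᵐ ω ∂ℙ, X i ω ≤ R)
    (l : ℝ) (hl : 0 < l) (hlR : l * R ≤ 1) :
    ∫ ω, Real.exp (l * ∑ i ∈ Finset.Icc 1 n, X i ω
      - 13/18 * l^2 * ∑ i ∈ Finset.Icc 1 n, (ℙ[fun ω' => (X i ω') ^ 2|F (i - 1)]) ω) ∂ℙ ≤ 1 := by
  set Q : ℕ → Ω → ℝ := fun i => ℙ[fun ω' => (X i ω') ^ 2|F (i - 1)] with hQdef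
  set G : ℕ → Ω → ℝ := fun k ω => Real.exp (l * ∑ i ∈ Finset.Icc 1 k, X i ω
      - 13/18 * l^2 * ∑ i ∈ Finset.Icc 1 k, Q i ω) with hGdef
  have hQnn : ∀ i, (0 : Ω → ℝ) ≤ᵐ[ℙ] Q i := fun i =>
    condExp_nonneg (ae_of_all _ fun ω => sq_nonneg _)
  -- a.e. bounds over all indices at once
  have hbddAll : ∀ᵐ ω ∂ℙ, ∀ i ∈ Finset.Icc 1 n, X i ω ≤ R :=
    (ae_ball_iff (Finset.Icc 1 n).countable_toSet).2 hbdd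
  have hQnnAll : ∀ᵐ ω ∂ℙ, ∀ i ∈ Finset.Icc 1 n, 0 ≤ Q i ω :=
    (ae_ball_iff (Finset.Icc 1 n).countable_toSet).2 fun i _ => hQnn i
  have hGmeas : ∀ k, k ≤ n → StronglyMeasurable[F k] (G k) := by
    intro k hk
    apply Real.continuous_exp.comp_stronglyMeasurable
    apply StronglyMeasurable.sub
    · apply StronglyMeasurable.const_mul
      apply Finset.stronglyMeasurable_fun_sum
      intro i hi
      have hi' := Finset.mem_Icc.1 hi
      exact (hadapted i (Finset.mem_Icc.2 ⟨hi'.1, hi'.2.trans hk⟩)).mono (F.mono hi'.2)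
    · apply StronglyMeasurable.const_mul
      apply Finset.stronglyMeasurable_fun_sum
      intro i hi
      have hi' := Finset.mem_Icc.1 hi
      exact (stronglyMeasurable_condExp).mono (F.mono ((Nat.sub_le i 1).trans hi'.2))
  have hGbound : ∀ k, k ≤ n → ∀ᵐ ω ∂ℙ, G k ω ≤ Real.exp (l * (R * k)) := by
    intro k hk
    filter_upwards [hbddAll, hQnnAll] with ω h1 h2
    apply Real.exp_le_exp.2
    have hsub : Finset.Icc 1 k ⊆ Finset.Icc 1 n :=
      Finset.Icc_subset_Icc_right hk
    have hXsum : ∑ i ∈ Finset.Icc 1 k, X i ω ≤ R * k := by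
      calc ∑ i ∈ Finset.Icc 1 k, X i ω ≤ ∑ i ∈ Finset.Icc 1 k, R :=
            Finset.sum_le_sum fun i hi => h1 i (hsub hi)
        _ = R * k := by rw [Finset.sum_const, Nat.card_Icc]; simp [mul_comm]
    have hQsum : 0 ≤ ∑ i ∈ Finset.Icc 1 k, Q i ω :=
      Finset.sum_nonneg fun i hi => h2 i (hsub hi)
    nlinarith [sq_nonneg l, mul_le_mul_of_nonneg_left hXsum hl.le, sq_nonneg (l * R)]
  have hGpos : ∀ k ω, 0 < G k ω := fun k ω => Real.exp_pos _
  have hGint : ∀ k, k ≤ n → Integrable (G k) ℙ := by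
    intro k hk
    refine Integrable.mono' (integrable_const (Real.exp (l * (R * k))))
      (((hGmeas k hk).mono (F.le k)).aestronglyMeasurable) ?_
    filter_upwards [hGbound k hk] with ω h
    rwa [Real.norm_eq_abs, abs_of_pos (hGpos k ω)]
  suffices H : ∀ k, k ≤ n → ∫ ω, G k ω ∂ℙ ≤ 1 from H n le_rfl
  intro k
  induction k with
  | zero =>
    intro _
    have he : Finset.Icc 1 0 = (∅ : Finset ℕ) := Finset.Icc_eq_empty (by norm_num)
    simp [hGdef, he]
  | succ k ih =>
    intro hk1
    have hk : k ≤ n := Nat.le_of_succ_le hk1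
    have hmem : k + 1 ∈ Finset.Icc 1 n := Finset.mem_Icc.2 ⟨Nat.succ_le_succ (Nat.zero_le k), hk1⟩
    have hQkmeas : StronglyMeasurable[F k] (Q (k+1)) := stronglyMeasurable_condExp
    set A : Ω → ℝ := fun ω => Real.exp (l * ∑ i ∈ Finset.Icc 1 k, X i ω
      - 13/18 * l^2 * ∑ i ∈ Finset.Icc 1 (k+1), Q i ω) with hAdef
    set E : Ω → ℝ := fun ω => Real.exp (l * X (k+1) ω) with hEdef
    have hsum_top : ∀ (f : ℕ → ℝ), ∑ i ∈ Finset.Icc 1 (k+1), f i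
        = ∑ i ∈ Finset.Icc 1 k, f i + f (k+1) := fun f =>
      Finset.sum_Icc_succ_top (Nat.le_add_left 1 k) f
    have hsplit : G (k+1) = A * E := by
      funext ω
      show G (k+1) ω = A ω * E ω
      rw [hAdef, hEdef, hGdef]
      simp only
      rw [← Real.exp_add]
      congr 1
      rw [hsum_top (fun i => X i ω)]
      ring
    have hAmeas : StronglyMeasurable[F k] A := by
      apply Real.continuous_exp.comp_stronglyMeasurable
      apply StronglyMeasurable.sub
      · apply StronglyMeasurable.const_mul
        apply Finset.stronglyMeasurable_fun_sum
        intro i hi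
        have hi' := Finset.mem_Icc.1 hi
        exact (hadapted i (Finset.mem_Icc.2 ⟨hi'.1, hi'.2.trans hk⟩)).mono (F.mono hi'.2)
      · apply StronglyMeasurable.const_mul
        apply Finset.stronglyMeasurable_fun_sum
        intro i hi
        have hi' := Finset.mem_Icc.1 hi
        have : i - 1 ≤ k := by omega
        exact (stronglyMeasurable_condExp).mono (F.mono this)
    have hApos : ∀ ω, 0 < A ω := fun ω => Real.exp_pos _
    have hAbound : ∀ᵐ ω ∂ℙ, A ω ≤ Real.exp (l * (R * k)) := by
      filter_upwards [hbddAll, hQnnAll] with ω h1 h2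
      apply Real.exp_le_exp.2
      have hsub : Finset.Icc 1 k ⊆ Finset.Icc 1 n := Finset.Icc_subset_Icc_right hk
      have hsub' : Finset.Icc 1 (k+1) ⊆ Finset.Icc 1 n := Finset.Icc_subset_Icc_right hk1
      have hXsum : ∑ i ∈ Finset.Icc 1 k, X i ω ≤ R * k := by
        calc ∑ i ∈ Finset.Icc 1 k, X i ω ≤ ∑ i ∈ Finset.Icc 1 k, R :=
              Finset.sum_le_sum fun i hi => h1 i (hsub hi)
          _ = R * k := by rw [Finset.sum_const, Nat.card_Icc]; simp [mul_comm]
      have hQsum : 0 ≤ ∑ i ∈ Finset.Icc 1 (k+1), Q i ω :=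
        Finset.sum_nonneg fun i hi => h2 i (hsub' hi)
      nlinarith [mul_le_mul_of_nonneg_left hXsum hl.le, sq_nonneg l]
    have hEbound : ∀ᵐ ω ∂ℙ, E ω ≤ Real.exp (l * R) := by
      filter_upwards [hbdd (k+1) hmem] with ω h
      exact Real.exp_le_exp.2 (mul_le_mul_of_nonneg_left h hl.le)
    have hEmeas : StronglyMeasurable (E) :=
      Real.continuous_exp.comp_stronglyMeasurable
        (((hadapted (k+1) hmem).mono (F.le _)).const_mul l)
    have hEint : Integrable E ℙ := by
      refine Integrable.mono' (integrable_const (Real.exp (l * R)))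
        hEmeas.aestronglyMeasurable ?_
      filter_upwards [hEbound] with ω h
      rwa [Real.norm_eq_abs, abs_of_pos (Real.exp_pos _)]
    have hAEint : Integrable (A * E) ℙ := by
      rw [← hsplit]
      exact hGint (k+1) hk1
    -- conditional expectation bound on E
    have hBint : Integrable (fun ω => 1 + l * X (k+1) ω + 13/18 * l^2 * (X (k+1) ω)^2) ℙ := by
      apply Integrable.add
      · exact (integrable_const 1).add ((hint (k+1) hmem).const_mul l)
      · exact (hint2 (k+1) hmem).const_mul _
    have hEleB : E ≤ᵐ[ℙ] fun ω => 1 + l * X (k+1) ω + 13/18 * l^2 * (X (k+1) ω)^2 := by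
      filter_upwards [hbdd (k+1) hmem] with ω h
      have h1 : l * X (k+1) ω ≤ 1 := by nlinarith
      have := expQuad (l * X (k+1) ω) h1
      calc E ω ≤ 1 + l * X (k+1) ω + 13/18 * (l * X (k+1) ω)^2 := this
        _ = 1 + l * X (k+1) ω + 13/18 * l^2 * (X (k+1) ω)^2 := by ring
    have hi1 : Integrable (fun ω => 1 + l * X (k+1) ω) ℙ :=
      (integrable_const (1:ℝ)).add ((hint (k+1) hmem).const_mul l)
    have hi2 : Integrable (fun ω => 13/18 * l^2 * (X (k+1) ω)^2) ℙ :=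
      (hint2 (k+1) hmem).const_mul _
    have hz : ℙ[fun ω => l * X (k+1) ω|F k] =ᵐ[ℙ] 0 := by
      refine (condExp_smul (m := F k) l (X (k+1))).trans ?_
      have h0 := hmds (k+1) hmem
      rw [show (k + 1) - 1 = k from rfl] at h0
      filter_upwards [h0] with ω h
      show l • (ℙ[X (k+1)|F k]) ω = 0
      rw [h]
      simp
    have h2 : ℙ[fun ω => 1 + l * X (k+1) ω|F k] =ᵐ[ℙ] fun _ => 1 := by
      refine (condExp_add (f := fun _ : Ω => (1:ℝ)) (g := fun ω => l * X (k+1) ω)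
        (integrable_const 1) ((hint (k+1) hmem).const_mul l) (F k)).trans ?_
      have hc : ℙ[fun _ : Ω => (1:ℝ)|F k] = fun _ => 1 := condExp_const (F.le k) 1
      filter_upwards [hz] with ω h
      show (ℙ[fun _ : Ω => (1:ℝ)|F k]) ω + (ℙ[fun ω => l * X (k+1) ω|F k]) ω = 1
      rw [hc, h]
      simp
    have h3 : ℙ[fun ω => 13/18 * l^2 * (X (k+1) ω)^2|F k]
        =ᵐ[ℙ] fun ω => 13/18 * l^2 * Q (k+1) ω := by
      refine ((condExp_smul (m := F k) (13/18 * l^2 : ℝ)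
        (fun ω => (X (k+1) ω)^2)).trans ?_ : _)
      have hq : Q (k+1) = ℙ[fun ω' => (X (k+1) ω')^2|F k] := rfl
      refine Filter.EventuallyEq.of_eq ?_
      funext ω
      show (13/18 * l^2 : ℝ) • (ℙ[fun ω' => (X (k+1) ω')^2|F k]) ω = _
      rw [← hq]
      simp [smul_eq_mul]
    have hcondB : ℙ[fun ω => 1 + l * X (k+1) ω + 13/18 * l^2 * (X (k+1) ω)^2|F k]
        =ᵐ[ℙ] fun ω => 1 + 13/18 * l^2 * Q (k+1) ω := by
      refine (condExp_add (f := fun ω => 1 + l * X (k+1) ω)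
        (g := fun ω => 13/18 * l^2 * (X (k+1) ω)^2) hi1 hi2 (F k)).trans ?_
      filter_upwards [h2, h3] with ω ha hb
      show (ℙ[fun ω => 1 + l * X (k+1) ω|F k]) ω
        + (ℙ[fun ω => 13/18 * l^2 * (X (k+1) ω)^2|F k]) ω = _
      rw [ha, hb]
    have hEcond : ℙ[E|F k] ≤ᵐ[ℙ] fun ω => Real.exp (13/18 * l^2 * Q (k+1) ω) := by
      have hm := condExp_mono (m := F k) hEint hBint hEleB
      filter_upwards [hm, hcondB, condExp_nonneg (μ := ℙ) (m := F k)
        (f := E) (ae_of_all _ fun ω => (Real.exp_pos _).le)] with ω h1 h2 _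
      calc (ℙ[E|F k]) ω ≤ (ℙ[fun ω => 1 + l * X (k+1) ω
            + 13/18 * l^2 * (X (k+1) ω)^2|F k]) ω := h1
        _ = 1 + 13/18 * l^2 * Q (k+1) ω := h2
        _ ≤ Real.exp (13/18 * l^2 * Q (k+1) ω) := by
            linarith [Real.add_one_le_exp (13/18 * l^2 * Q (k+1) ω)]
    have hpull : ℙ[A * E|F k] =ᵐ[ℙ] A * ℙ[E|F k] :=
      condExp_mul_of_stronglyMeasurable_left hAmeas hAEint hEint
    have hle : ℙ[G (k+1)|F k] ≤ᵐ[ℙ] G k := by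
      rw [hsplit]
      filter_upwards [hpull, hEcond] with ω h1 h2
      rw [h1]
      calc A ω * (ℙ[E|F k]) ω ≤ A ω * Real.exp (13/18 * l^2 * Q (k+1) ω) :=
            mul_le_mul_of_nonneg_left h2 (hApos ω).le
        _ = G k ω := by
            rw [hAdef, hGdef]
            simp only
            rw [← Real.exp_add]
            congr 1
            rw [hsum_top (fun i => Q i ω)]
            ring
    calc ∫ ω, G (k+1) ω ∂ℙ = ∫ ω, (ℙ[G (k+1)|F k]) ω ∂ℙ :=
          (integral_condExp (F.le k) (f := G (k+1))).symm
      _ ≤ ∫ ω, G k ω ∂ℙ := integral_mono_ae integrable_condExp (hGint k hk) hle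
      _ ≤ 1 := ih hk

lemma freedman_mgf
    {Ω : Type*} {m0 : MeasurableSpace Ω} (ℙ : Measure Ω) [IsProbabilityMeasure ℙ]
    (n : ℕ) (F : Filtration ℕ m0)
    (X : ℕ → Ω → ℝ)
    (hadapted : ∀ i ∈ Finset.Icc 1 n, StronglyMeasurable[F i] (X i))
    (hint : ∀ i ∈ Finset.Icc 1 n, Integrable (X i) ℙ)
    (hint2 : ∀ i ∈ Finset.Icc 1 n, Integrable (fun ω => (X i ω) ^ 2) ℙ)
    (hmds : ∀ i ∈ Finset.Icc 1 n, ℙ[X i|F (i - 1)] =ᵐ[ℙ] 0)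
    (R : ℝ) (hR : 0 < R)
    (hbdd : ∀ i ∈ Finset.Icc 1 n, ∀ᵐ ω ∂ℙ, X i ω ≤ R)
    (l : ℝ) (hl : 0 < l) (hlR : l * R ≤ 1)
    (Vn : ℝ)
    (hvar : ∀ᵐ ω ∂ℙ, ∑ i ∈ Finset.Icc 1 n, (ℙ[fun ω' => (X i ω') ^ 2|F (i - 1)]) ω ≤ Vn) :
    Integrable (fun ω => Real.exp (l * ∑ i ∈ Finset.Icc 1 n, X i ω)) ℙ ∧
    ∫ ω, Real.exp (l * ∑ i ∈ Finset.Icc 1 n, X i ω) ∂ℙ ≤ Real.exp (13/18 * l^2 * Vn) := by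
  have hGle := freedman_mgf_aux ℙ n F X hadapted hint hint2 hmds R hR hbdd l hl hlR
  set Q : ℕ → Ω → ℝ := fun i => ℙ[fun ω' => (X i ω') ^ 2|F (i - 1)] with hQdef
  set G : Ω → ℝ := fun ω => Real.exp (l * ∑ i ∈ Finset.Icc 1 n, X i ω
      - 13/18 * l^2 * ∑ i ∈ Finset.Icc 1 n, Q i ω) with hGdef
  have hQnn : ∀ i, (0 : Ω → ℝ) ≤ᵐ[ℙ] Q i := fun i =>
    condExp_nonneg (ae_of_all _ fun ω => sq_nonneg _)
  have hbddAll : ∀ᵐ ω ∂ℙ, ∀ i ∈ Finset.Icc 1 n, X i ω ≤ R :=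
    (ae_ball_iff (Finset.Icc 1 n).countable_toSet).2 hbdd
  have hQnnAll : ∀ᵐ ω ∂ℙ, ∀ i ∈ Finset.Icc 1 n, 0 ≤ Q i ω :=
    (ae_ball_iff (Finset.Icc 1 n).countable_toSet).2 fun i _ => hQnn i
  have hXsum : ∀ᵐ ω ∂ℙ, ∑ i ∈ Finset.Icc 1 n, X i ω ≤ R * n := by
    filter_upwards [hbddAll] with ω h1
    calc ∑ i ∈ Finset.Icc 1 n, X i ω ≤ ∑ i ∈ Finset.Icc 1 n, R :=
          Finset.sum_le_sum fun i hi => h1 i hi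
      _ = R * n := by rw [Finset.sum_const, Nat.card_Icc]; simp [mul_comm]
  have hSmeas : StronglyMeasurable (fun ω => ∑ i ∈ Finset.Icc 1 n, X i ω) :=
    Finset.stronglyMeasurable_fun_sum _ fun i hi => (hadapted i hi).mono (F.le i)
  have hSint : Integrable (fun ω => Real.exp (l * ∑ i ∈ Finset.Icc 1 n, X i ω)) ℙ := by
    refine Integrable.mono' (integrable_const (Real.exp (l * (R * n))))
      (Real.continuous_exp.comp_stronglyMeasurable
        (hSmeas.const_mul l)).aestronglyMeasurable ?_
    filter_upwards [hXsum] with ω h1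
    rw [Real.norm_eq_abs, abs_of_pos (Real.exp_pos _)]
    exact Real.exp_le_exp.2 (mul_le_mul_of_nonneg_left h1 hl.le)
  refine ⟨hSint, ?_⟩
  have hGmeas : StronglyMeasurable G := by
    apply Real.continuous_exp.comp_stronglyMeasurable
    apply StronglyMeasurable.sub (hSmeas.const_mul l)
    apply StronglyMeasurable.const_mul
    apply Finset.stronglyMeasurable_fun_sum
    intro i hi
    exact (stronglyMeasurable_condExp).mono (F.le _)
  have hGbound : ∀ᵐ ω ∂ℙ, G ω ≤ Real.exp (l * (R * n)) := by
    filter_upwards [hXsum, hQnnAll] with ω h1 h2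
    apply Real.exp_le_exp.2
    have hQsum : 0 ≤ ∑ i ∈ Finset.Icc 1 n, Q i ω :=
      Finset.sum_nonneg fun i hi => h2 i hi
    nlinarith [mul_le_mul_of_nonneg_left h1 hl.le, sq_nonneg l]
  have hGint : Integrable G ℙ := by
    refine Integrable.mono' (integrable_const (Real.exp (l * (R * n))))
      hGmeas.aestronglyMeasurable ?_
    filter_upwards [hGbound] with ω h
    rwa [Real.norm_eq_abs, abs_of_pos (Real.exp_pos _)]
  have hshift : ∀ᵐ ω ∂ℙ, Real.exp (l * ∑ i ∈ Finset.Icc 1 n, X i ω)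
      ≤ Real.exp (13/18 * l^2 * Vn) * G ω := by
    filter_upwards [hvar] with ω hv
    rw [hGdef]
    simp only
    rw [← Real.exp_add]
    apply Real.exp_le_exp.2
    have hc : (0:ℝ) ≤ 13/18 * l^2 := by positivity
    have := mul_le_mul_of_nonneg_left hv hc
    linarith
  calc ∫ ω, Real.exp (l * ∑ i ∈ Finset.Icc 1 n, X i ω) ∂ℙ
      ≤ ∫ ω, Real.exp (13/18 * l^2 * Vn) * G ω ∂ℙ :=
        integral_mono_ae hSint (hGint.const_mul _) hshift
    _ = Real.exp (13/18 * l^2 * Vn) * ∫ ω, G ω ∂ℙ := integral_const_mul _ _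
    _ ≤ Real.exp (13/18 * l^2 * Vn) * 1 :=
        mul_le_mul_of_nonneg_left hGle (Real.exp_pos _).le
    _ = Real.exp (13/18 * l^2 * Vn) := mul_one _

set_option maxHeartbeats 1000000 in
/-- optimized Freedman inequality, equation (3) of the paper: for a
martingale difference sequence `X_1, …, X_n` with `X_i ≤ R` a.s. and cumulative conditional
variance at most `Vn` a.s., for any `δ ∈ (0,1)`, with probability at least `1 − δ`,
`Σ_{i=1}^n X_i ≤ (e − 1)·(√(Vn·log(1/δ)) + R·log(1/δ))`. -/
theorem freedman_inequality_optimized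
    {Ω : Type*} {m0 : MeasurableSpace Ω} (ℙ : Measure Ω) [IsProbabilityMeasure ℙ]
    (n : ℕ) (F : Filtration ℕ m0)
    (X : ℕ → Ω → ℝ)
    (hadapted : ∀ i ∈ Finset.Icc 1 n, StronglyMeasurable[F i] (X i))
    (hint : ∀ i ∈ Finset.Icc 1 n, Integrable (X i) ℙ)
    (hint2 : ∀ i ∈ Finset.Icc 1 n, Integrable (fun ω => (X i ω) ^ 2) ℙ)
    (hmds : ∀ i ∈ Finset.Icc 1 n, ℙ[X i|F (i - 1)] =ᵐ[ℙ] 0)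
    (R : ℝ) (hR : 0 < R)
    (hbdd : ∀ i ∈ Finset.Icc 1 n, ∀ᵐ ω ∂ℙ, X i ω ≤ R)
    (Vn : ℝ) (hVn : 0 ≤ Vn)
    (hvar : ∀ᵐ ω ∂ℙ, ∑ i ∈ Finset.Icc 1 n, (ℙ[fun ω' => (X i ω') ^ 2|F (i - 1)]) ω ≤ Vn)
    (δ : ℝ) (hδ : δ ∈ Set.Ioo (0 : ℝ) 1) :
    1 - δ ≤ (ℙ {ω | ∑ i ∈ Finset.Icc 1 n, X i ω ≤
        (Real.exp 1 - 1) * (Real.sqrt (Vn * Real.log (1 / δ)) + R * Real.log (1 / δ))}).toReal := by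
  obtain ⟨hδ0, hδ1⟩ := hδ
  have hL : 0 < Real.log (1/δ) := Real.log_pos (one_lt_one_div hδ0 hδ1)
  set L := Real.log (1/δ) with hLdef
  set t := (Real.exp 1 - 1) * (Real.sqrt (Vn * L) + R * L) with htdef
  have hlogδ : Real.log δ = -L := by
    rw [hLdef, one_div, Real.log_inv, neg_neg]
  have he : (2.7 : ℝ) < Real.exp 1 := by
    have := Real.exp_one_gt_d9
    linarith
  clear_value L t
  have hSmeas : Measurable fun ω => ∑ i ∈ Finset.Icc 1 n, X i ω :=
    Finset.measurable_sum _ fun i hi => ((hadapted i hi).mono (F.le i)).measurable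
  have key : ∀ l : ℝ, 0 < l → l * R ≤ 1 → 13/18 * l^2 * Vn - l * t ≤ Real.log δ →
      (ℙ {ω | t < ∑ i ∈ Finset.Icc 1 n, X i ω}).toReal ≤ δ := by
    intro l hl hlR hexp
    obtain ⟨hSint, hmgf⟩ := freedman_mgf ℙ n F X hadapted hint hint2 hmds R hR hbdd
      l hl hlR Vn hvar
    have hnn : 0 ≤ᵐ[ℙ] fun ω => Real.exp (l * ∑ i ∈ Finset.Icc 1 n, X i ω) :=
      ae_of_all _ fun ω => (Real.exp_pos _).le
    have hM := mul_meas_ge_le_integral_of_nonneg hnn hSint (Real.exp (l * t))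
    have hsub : {ω | t < ∑ i ∈ Finset.Icc 1 n, X i ω}
        ⊆ {ω | Real.exp (l * t) ≤ Real.exp (l * ∑ i ∈ Finset.Icc 1 n, X i ω)} := fun ω hω =>
      Real.exp_le_exp.2 (mul_le_mul_of_nonneg_left (le_of_lt hω) hl.le)
    have h1 : (ℙ {ω | t < ∑ i ∈ Finset.Icc 1 n, X i ω}).toReal
        ≤ (ℙ {ω | Real.exp (l * t) ≤ Real.exp (l * ∑ i ∈ Finset.Icc 1 n, X i ω)}).toReal :=
      ENNReal.toReal_mono (measure_ne_top _ _) (measure_mono hsub)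
    have h2 : Real.exp (l * t) * (ℙ {ω | t < ∑ i ∈ Finset.Icc 1 n, X i ω}).toReal
        ≤ Real.exp (13/18 * l^2 * Vn) := by
      calc Real.exp (l * t) * (ℙ {ω | t < ∑ i ∈ Finset.Icc 1 n, X i ω}).toReal
          ≤ Real.exp (l * t) * (ℙ {ω | Real.exp (l * t)
              ≤ Real.exp (l * ∑ i ∈ Finset.Icc 1 n, X i ω)}).toReal :=
            mul_le_mul_of_nonneg_left h1 (Real.exp_pos _).le
        _ ≤ ∫ ω, Real.exp (l * ∑ i ∈ Finset.Icc 1 n, X i ω) ∂ℙ := hM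
        _ ≤ Real.exp (13/18 * l^2 * Vn) := hmgf
    have h3 : (ℙ {ω | t < ∑ i ∈ Finset.Icc 1 n, X i ω}).toReal
        ≤ Real.exp (13/18 * l^2 * Vn - l * t) := by
      rw [Real.exp_sub, le_div_iff₀ (Real.exp_pos _)]
      linarith
    calc (ℙ {ω | t < ∑ i ∈ Finset.Icc 1 n, X i ω}).toReal
        ≤ Real.exp (13/18 * l^2 * Vn - l * t) := h3
      _ ≤ Real.exp (Real.log δ) := Real.exp_le_exp.2 hexp
      _ = δ := Real.exp_log hδ0
  suffices hkey : (ℙ {ω | t < ∑ i ∈ Finset.Icc 1 n, X i ω}).toReal ≤ δ by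
    have hms : MeasurableSet {ω | t < ∑ i ∈ Finset.Icc 1 n, X i ω} :=
      measurableSet_lt measurable_const hSmeas
    have hcompl : {ω | ∑ i ∈ Finset.Icc 1 n, X i ω ≤ t}
        = {ω | t < ∑ i ∈ Finset.Icc 1 n, X i ω}ᶜ := by
      ext ω; simp [not_lt]
    rw [hcompl, prob_compl_eq_one_sub hms,
      ENNReal.toReal_sub_of_le prob_le_one ENNReal.one_ne_top, ENNReal.toReal_one]
    linarith
  rcases le_or_gt (R^2 * L) (13/18 * Vn) with hcase | hcase
  · -- big variance: l = sqrt (L / (13/18 * Vn))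
    have hVpos : 0 < Vn := by nlinarith [sq_nonneg R, mul_pos (mul_pos hR hR) hL]
    have hden : (0:ℝ) < 13/18 * Vn := by linarith
    have hdiv : (0:ℝ) < L / (13/18 * Vn) := div_pos hL hden
    set l := Real.sqrt (L / (13/18 * Vn)) with hldef
    have hl : 0 < l := Real.sqrt_pos.2 hdiv
    have hl2 : l^2 = L / (13/18 * Vn) := Real.sq_sqrt hdiv.le
    have hlR : l * R ≤ 1 := by
      have hsq : (l * R)^2 ≤ 1 := by
        have : (l*R)^2 = l^2 * R^2 := by ring
        rw [this, hl2]
        rw [div_mul_eq_mul_div, div_le_one hden]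
        nlinarith
      nlinarith [mul_pos hl hR]
    apply key l hl hlR
    rw [hlogδ]
    -- 13/18 * l^2 * Vn = L
    have hA : 13/18 * l^2 * Vn = L := by
      rw [hl2]
      field_simp
    -- l * sqrt (Vn * L) ≥ (20/17) * L
    have hB : (20/17) * L ≤ l * Real.sqrt (Vn * L) := by
      rw [hldef, ← Real.sqrt_mul hdiv.le]
      have harg : L / (13/18 * Vn) * (Vn * L) = L^2 * (18/13) := by
        field_simp
      rw [harg, Real.sqrt_mul (sq_nonneg L), Real.sqrt_sq hL.le]
      have hs : (20/17 : ℝ) ≤ Real.sqrt (18/13) := by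
        have h := Real.sqrt_le_sqrt (show ((20:ℝ)/17)^2 ≤ 18/13 by norm_num)
        rwa [Real.sqrt_sq (by norm_num)] at h
      nlinarith
    have hC : 0 ≤ l * (R * L) := by positivity
    rw [htdef]
    nlinarith [mul_le_mul_of_nonneg_left hB (by linarith : (0:ℝ) ≤ Real.exp 1 - 1)]
  · -- small variance: l = 1/R
    have hl : 0 < 1/R := by positivity
    have hlR : (1/R) * R ≤ 1 := by
      rw [one_div, inv_mul_cancel₀ hR.ne']
    apply key (1/R) hl hlR
    rw [hlogδ, htdef]
    set u := Real.sqrt Vn with hudef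
    set s := Real.sqrt L with hsdef
    have hu0 : 0 ≤ u := Real.sqrt_nonneg _
    have hs0 : 0 ≤ s := Real.sqrt_nonneg _
    have hVu : Vn = u^2 := (Real.sq_sqrt hVn).symm
    have hLs : L = s^2 := (Real.sq_sqrt hL.le).symm
    have hts : Real.sqrt (Vn * L) = u * s := Real.sqrt_mul hVn L
    clear_value u s
    have hbu : (4249/5000) * u ≤ R * s := by
      have hsq : ((4249/5000) * u)^2 ≤ (R * s)^2 := by
        have h1 : ((4249/5000:ℝ) * u)^2 = (18054001/25000000) * u^2 := by ring
        have h2 : (R * s)^2 = R^2 * s^2 := by ring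
        rw [h1, h2, ← hVu, ← hLs]
        nlinarith
      have h := Real.sqrt_le_sqrt hsq
      rwa [Real.sqrt_sq (by positivity), Real.sqrt_sq (by positivity)] at h
    have hstep : (4249/5000) * u^2 ≤ R * s * u := by
      have h := mul_le_mul_of_nonneg_right hbu hu0
      calc (4249/5000) * u^2 = 4249/5000 * u * u := by ring
        _ ≤ R * s * u := h
    have hrsu : (0:ℝ) ≤ R * s * u := mul_nonneg (mul_nonneg hR.le hs0) hu0
    have h17 : (17/10 : ℝ) ≤ Real.exp 1 - 1 := by linarith
    have hmain : (13/18) * u^2 ≤ (Real.exp 1 - 1) * (R * s * u)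
        + (Real.exp 1 - 2) * (R^2 * s^2) := by
      have hb1 : (13/18) * u^2 ≤ (17/10) * ((4249/5000) * u^2) := by
        linarith [sq_nonneg u]
      have hb2 : (17/10 : ℝ) * ((4249/5000) * u^2) ≤ (17/10) * (R * s * u) := by
        linarith [hstep]
      have hb3 : (17/10 : ℝ) * (R * s * u) ≤ (Real.exp 1 - 1) * (R * s * u) :=
        mul_le_mul_of_nonneg_right h17 hrsu
      have hb4 : (0:ℝ) ≤ (Real.exp 1 - 2) * (R^2 * s^2) := by
        apply mul_nonneg (by linarith) (by positivity)
      linarith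
    have hR2 : (0:ℝ) < R^2 := by positivity
    have h4 : 13/18 * u^2 / R^2
        ≤ ((Real.exp 1 - 1) * (R * s * u) + (Real.exp 1 - 2) * (R^2 * s^2)) / R^2 :=
      (div_le_div_iff_of_pos_right hR2).2 (by linarith)
    have e1 : 13/18 * (1/R)^2 * u^2 = 13/18 * u^2 / R^2 := by
      field_simp
    have e2 : ((Real.exp 1 - 1) * (R * s * u) + (Real.exp 1 - 2) * (R^2 * s^2)) / R^2
        = 1/R * ((Real.exp 1 - 1) * (u * s + R * s^2)) - s^2 := by
      field_simp
      ring
    rw [hts, hVu, hLs]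
    linarith [h4, e1, e2]
end

section
/- Let K ≥ 1 and c > 0 be real numbers, let s < s′ be integers, let s̃ := ⌈(s + s′)/2⌉, and let d_s, d_{s+1}, …, d_{s′} be real numbers satisfying: (a) Σ_{t=s}^{s′} d_t ≥ c·√(K·(s′ − s)), and (b) Σ_{t=s}^{s̃−1} d_t ≤ c·√(K·(s̃ − 1 − s)). Then Σ_{t=s̃}^{s′} d_t ≥ (c/4)·√(K·(s′ − s̃)). -/
/-!
The sum over the second half is the whole sum minus the sum over the first half, so by (a) and (b)
it is at least `c (√(K (s' - s)) - √(K (s̃ - 1 - s)))`. Since `s̃` is the upper midpoint, the first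
half is no longer than the second, and `√x + √y / 4 ≤ √(x + y)` for `0 ≤ x ≤ y` bounds that
difference from below by `√(K (s' - s̃)) / 4`.
-/

theorem Real.sqrt_add_sqrt_div_four_le_sqrt_add {x y : ℝ} (hx : 0 ≤ x) (hxy : x ≤ y) :
    √x + √y / 4 ≤ √(x + y) := by
  have hy : 0 ≤ y := hx.trans hxy
  rw [Real.le_sqrt (by positivity) (by positivity)]
  nlinarith [Real.sq_sqrt hx, Real.sq_sqrt hy, Real.sqrt_le_sqrt hxy, Real.sqrt_nonneg x]

theorem Int.ceil_intCast_div_two (a : ℤ) : ⌈(a : ℚ) / 2⌉ = -((-a) / 2) := by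
  exact_mod_cast Rat.ceil_intCast_div_natCast a 2

theorem Finset.sum_Icc_eq_sum_Icc_sub_one_add_sum_Icc {M : Type*} [AddCommMonoid M] (f : ℤ → M)
    {a m b : ℤ} (ham : a ≤ m) (hmb : m ≤ b + 1) :
    ∑ t ∈ Icc a b, f t = ∑ t ∈ Icc a (m - 1), f t + ∑ t ∈ Icc m b, f t := by
  rw [← sum_union (disjoint_left.2 fun t ht ht' => by simp only [mem_Icc] at ht ht'; omega)]
  congr 1
  ext t
  simp only [mem_union, mem_Icc]
  omega

/-- Lemma 9 of the paper: if `Σ_{t=s}^{s'} d t ≥ c·√(K·(s'−s))` while the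
sum up to just before the midpoint `smid = ⌈(s+s')/2⌉` satisfies
`Σ_{t=s}^{smid−1} d t ≤ c·√(K·(smid−1−s))`, then `Σ_{t=smid}^{s'} d t ≥ (c/4)·√(K·(s'−smid))`. -/
theorem detect_lemma
    (K c : ℝ) (hK : 1 ≤ K) (hc : 0 < c)
    (s s' smid : ℤ) (hss : s < s')
    (hmid : smid = ⌈((s : ℚ) + (s' : ℚ)) / 2⌉)
    (d : ℤ → ℝ)
    (ha : c * Real.sqrt (K * ((s' - s : ℤ) : ℝ)) ≤ ∑ t ∈ Finset.Icc s s', d t)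
    (hb : ∑ t ∈ Finset.Icc s (smid - 1), d t ≤ c * Real.sqrt (K * ((smid - 1 - s : ℤ) : ℝ))) :
    (c / 4) * Real.sqrt (K * ((s' - smid : ℤ) : ℝ)) ≤ ∑ t ∈ Finset.Icc smid s', d t := by
  rw [← Int.cast_add, Int.ceil_intCast_div_two] at hmid
  have hK0 : 0 ≤ K := zero_le_one.trans hK
  have hsplit := Finset.sum_Icc_eq_sum_Icc_sub_one_add_sum_Icc d
    (show s ≤ smid by omega) (show smid ≤ s' + 1 by omega)
  have hsqrt : √(K * ((smid - 1 - s : ℤ) : ℝ)) + √(K * ((s' - smid : ℤ) : ℝ)) / 4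
      ≤ √(K * ((s' - s : ℤ) : ℝ)) :=
    calc _ ≤ √(K * ((smid - 1 - s : ℤ) : ℝ) + K * ((s' - smid : ℤ) : ℝ)) :=
          Real.sqrt_add_sqrt_div_four_le_sqrt_add
            (mul_nonneg hK0 (by exact_mod_cast (show 0 ≤ smid - 1 - s by omega)))
            (mul_le_mul_of_nonneg_left
              (by exact_mod_cast (show smid - 1 - s ≤ s' - smid by omega)) hK0)
      _ ≤ _ := Real.sqrt_le_sqrt (by push_cast; nlinarith)
  linarith [mul_le_mul_of_nonneg_left hsqrt hc.le]
end
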